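/- arXiv:2605.19424 — 3 statements merged into one kernel-verified Lean document; each statement's English description precedes it below -/
import Mathlib

section
/- Under the standing setup, suppose T_g is not a t-intersecting family, |T_f| = 1, and T_f ⊆ T_g. Then |T_g| ≤ (t+1)(ℓ−t)+1. Moreover, if t ≥ 2 and |T_g| = (t+1)(ℓ−t)+1, then (F,G) is isomorphic to (C₂(k,t;ℓ), C₁(ℓ,t)), where C₁(ℓ,t) = {[ℓ+1]\{i} : i ∈ [t+1]} ∪ {G ∈ C([n],ℓ) : [t+1] ⊆ G} and C₂(k,t;ℓ) = {F ∈ C([n],k) : |F∩[t+1]| = t and |F∩[t+2,ℓ+1]| ≥ 1} ∪ {F ∈ C([n],k) : [t+1] ⊆ F}. -/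
/-!
Let `T` be the unique `(t+1)`-cover of `F`; it also covers `G`. By maximality every `(t+1)`-cover
`T'` of `G` extends to a member of `F`, so `|T ∩ T'| ≥ t`: `T'` is `T` or an exchange
`T - x + y`. Since `τ_t(G) = t+1`, for each `x ∈ T` some `B_x ∈ G` meets `T - x` in only `t-1`
points, which forces `y ∈ B_x \ T`; so there are at most `(t+1)(ℓ-t)` exchanges. In the extremal
case every such exchange is a cover, and for `t ≥ 2` this makes all `B_x \ T` equal to one
`(ℓ-t)`-set `D`. Then `G ⊆ 𝒞₁(T, D)` and `F ⊆ 𝒞₂(T, D)`, these two families are cross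
`t`-intersecting, so maximality turns the inclusions into equalities; a permutation of `[n]`
moving `T` to `[t+1]` and `D` to `[t+2, ℓ+1]` finishes.
-/

/-- The interval `[a,b] = {a, a+1, …, b}` as a finset of naturals. -/
def Iv (a b : ℕ) : Finset ℕ := Finset.Icc a b

/-- `ksubsets S k` is the family of all `k`-element subsets of `S`. -/
def ksubsets (S : Finset ℕ) (k : ℕ) : Finset (Finset ℕ) :=
  S.powerset.filter (fun F => F.card = k)

/-- Families `F` and `G` are cross `t`-intersecting. -/
def crossInt (t : ℕ) (F G : Finset (Finset ℕ)) : Prop :=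
  ∀ A ∈ F, ∀ B ∈ G, t ≤ (A ∩ B).card

/-- The `t`-covering number of a family of subsets of `[n]`. -/
noncomputable def tau (n t : ℕ) (F : Finset (Finset ℕ)) : ℕ :=
  sInf {c : ℕ | ∃ T : Finset ℕ, T ⊆ Finset.Icc 1 n ∧ T.card = c ∧ ∀ A ∈ F, t ≤ (T ∩ A).card}

/-- The collection of all `t`-covers of `F` of size `t+1`. -/
def covers (n t : ℕ) (F : Finset (Finset ℕ)) : Finset (Finset ℕ) :=
  (Finset.Icc 1 n).powerset.filter (fun T => T.card = t + 1 ∧ ∀ A ∈ F, t ≤ (T ∩ A).card)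

/-- `F ⊆ ksubsets S k` and `G ⊆ ksubsets S l` form a maximal cross `t`-intersecting pair. -/
def maximalCrossIn (S : Finset ℕ) (k l t : ℕ) (F G : Finset (Finset ℕ)) : Prop :=
  F ⊆ ksubsets S k ∧ G ⊆ ksubsets S l ∧ crossInt t F G ∧
  ∀ F' G' : Finset (Finset ℕ), F' ⊆ ksubsets S k → G' ⊆ ksubsets S l →
    crossInt t F' G' → F ⊆ F' → G ⊆ G' → F = F' ∧ G = G'

/-- Elementwise image of a family under a permutation. -/
def mapFam (σ : Equiv.Perm ℕ) (F : Finset (Finset ℕ)) : Finset (Finset ℕ) :=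
  F.image (fun A => A.image σ)

/-- `σ` is a permutation of `[n]` (maps `[n]` into, hence onto, itself). -/
def permOn (n : ℕ) (σ : Equiv.Perm ℕ) : Prop := ∀ x ∈ Finset.Icc 1 n, σ x ∈ Finset.Icc 1 n

/-- The pairs `(F, G)` and `(F', G')` are isomorphic via a permutation of `[n]`. -/
def isoPair (n : ℕ) (F G F' G' : Finset (Finset ℕ)) : Prop :=
  ∃ σ : Equiv.Perm ℕ, permOn n σ ∧ mapFam σ F = F' ∧ mapFam σ G = G'

/-- `F` and `F'` are isomorphic via a permutation of `[n]`. -/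
def isoFam (n : ℕ) (F F' : Finset (Finset ℕ)) : Prop :=
  ∃ σ : Equiv.Perm ℕ, permOn n σ ∧ mapFam σ F = F'

/-- Construction `𝒜(k,t) = {F ∈ C([n],k) : |F ∩ [t+2]| ≥ t+1}`. -/
def famA (n k t : ℕ) : Finset (Finset ℕ) :=
  (ksubsets (Iv 1 n) k).filter (fun F => t + 1 ≤ (F ∩ Iv 1 (t+2)).card)

/-- Construction `𝒞₁(ℓ,t) = {[ℓ+1]\{i} : i ∈ [t+1]} ∪ {G ∈ C([n],ℓ) : [t+1] ⊆ G}`. -/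
def famC1 (n l t : ℕ) : Finset (Finset ℕ) :=
  (Iv 1 (t+1)).image (fun i => (Iv 1 (l+1)).erase i) ∪
  (ksubsets (Iv 1 n) l).filter (fun G => Iv 1 (t+1) ⊆ G)

/-- Construction `𝒞₂(k,t;ℓ)`. -/
def famC2 (n k t l : ℕ) : Finset (Finset ℕ) :=
  (ksubsets (Iv 1 n) k).filter
    (fun F => (F ∩ Iv 1 (t+1)).card = t ∧ 1 ≤ (F ∩ Iv (t+2) (l+1)).card) ∪
  (ksubsets (Iv 1 n) k).filter (fun F => Iv 1 (t+1) ⊆ F)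

/-- Construction `ℋ(k,t;X,Y) = {F ∈ C([n],k) : [t] ⊆ F, |F∩Y| ≥ 1} ∪ {(X∪[t])\{i} : i ∈ [t]}`. -/
def famH (n k t : ℕ) (X Y : Finset ℕ) : Finset (Finset ℕ) :=
  (ksubsets (Iv 1 n) k).filter (fun F => Iv 1 t ⊆ F ∧ 1 ≤ (F ∩ Y).card) ∪
  (Iv 1 t).image (fun i => (X ∪ Iv 1 t).erase i)

/-- Construction `ℬ(k;(a₁,a₂,a₃,a₄))`. -/
def famB (n k a1 a2 a3 a4 : ℕ) : Finset (Finset ℕ) :=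
  (ksubsets (Iv 1 n) k).filter
    (fun F => ({a1, a2} : Finset ℕ) ⊆ F ∨ ({a2, a3} : Finset ℕ) ⊆ F ∨ ({a3, a4} : Finset ℕ) ⊆ F)

/-- Binomial coefficient `C(a,b)` for integers, `0` if `b < 0` or `b > a`. -/
def ch (a b : ℤ) : ℤ := if 0 ≤ b ∧ b ≤ a then (Nat.choose a.toNat b.toNat : ℤ) else 0

/-- `g(m,x,y,t) = m·C(n−t−1,x−t−1) + y(t+1)(y−t+1)·C(n−t−2,x−t−2)`. -/
def gfun (n m x y t : ℤ) : ℤ :=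
  m * ch (n - t - 1) (x - t - 1) + y * (t + 1) * (y - t + 1) * ch (n - t - 2) (x - t - 2)

/-- `a(x,t) = (t+2)·C(n−t−2,x−t−1) + C(n−t−2,x−t−2)`. -/
def afun (n x t : ℤ) : ℤ := (t + 2) * ch (n - t - 2) (x - t - 1) + ch (n - t - 2) (x - t - 2)

/-- `c₁(y,t) = C(n−t−1,y−t−1) + t + 1`. -/
def c1fun (n y t : ℤ) : ℤ := ch (n - t - 1) (y - t - 1) + t + 1

/-- `c₂(x,y,t) = (t+1)(C(n−t−1,x−t) − C(n−y−1,x−t)) + C(n−t−1,x−t−1)`. -/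
def c2fun (n x y t : ℤ) : ℤ :=
  (t + 1) * (ch (n - t - 1) (x - t) - ch (n - y - 1) (x - t)) + ch (n - t - 1) (x - t - 1)

/-- `h(x,y,t) = C(n−t,x−t) − C(n−y−1,x−t) + t`. -/
def hfun (n x y t : ℤ) : ℤ := ch (n - t) (x - t) - ch (n - y - 1) (x - t) + t

open Finset

namespace Finset

variable {α : Type*} [DecidableEq α]

theorem notMem_of_inter_eq_erase {T B : Finset α} {z : α} (hz : z ∈ T)
    (h : T ∩ B = T.erase z) : z ∉ B :=
  fun hzB => notMem_erase z T (h ▸ mem_inter.2 ⟨hz, hzB⟩)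

theorem subset_or_exists_inter_eq_erase {T A : Finset α} {t : ℕ} (hT : #T = t + 1)
    (h : t ≤ #(T ∩ A)) : T ⊆ A ∨ ∃ z ∈ T, T ∩ A = T.erase z := by
  by_cases hTA : T ⊆ A
  · exact Or.inl hTA
  obtain ⟨z, hzT, hzA⟩ := not_subset.1 hTA
  have hsub : T ∩ A ⊆ T.erase z := fun w hw =>
    mem_erase.2 ⟨fun hwz => hzA (hwz ▸ (mem_inter.1 hw).2), (mem_inter.1 hw).1⟩
  refine Or.inr ⟨z, hzT, eq_of_subset_of_card_le hsub ?_⟩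
  rw [card_erase_of_mem hzT]
  omega

theorem exists_eq_insert_erase_of_inter_eq_erase {T T' : Finset α} {x : α} (hx : x ∈ T)
    (hcard : #T' = #T) (h : T ∩ T' = T.erase x) : ∃ y ∉ T, T' = insert y (T.erase x) := by
  have hone : #(T' \ T) = 1 := by
    have := card_pos.2 ⟨x, hx⟩
    rw [card_sdiff, h, card_erase_of_mem hx]
    omega
  obtain ⟨y, hy⟩ := card_eq_one.1 hone
  have hy' : y ∈ T' \ T := hy ▸ mem_singleton_self y
  refine ⟨y, (mem_sdiff.1 hy').2, ?_⟩
  calc T' = T' \ T ∪ T' ∩ T := (sdiff_union_inter T' T).symm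
    _ = insert y (T.erase x) := by rw [hy, inter_comm, h, insert_eq]

theorem card_inter_lt_of_inter_subset {T A B : Finset α} {t : ℕ} {x z : α} (hT : #T = t + 1)
    (hx : x ∈ T) (hz : z ∈ T) (hxz : x ≠ z) (hxA : x ∉ A) (hzB : z ∉ B) (hAB : A ∩ B ⊆ T) :
    #(A ∩ B) < t := by
  have hsub : A ∩ B ⊆ (T.erase x).erase z := fun w hw => by
    obtain ⟨hwA, hwB⟩ := mem_inter.1 hw
    exact mem_erase.2 ⟨fun h => hzB (h ▸ hwB), mem_erase.2 ⟨fun h => hxA (h ▸ hwA), hAB hw⟩⟩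
  have hz' : z ∈ T.erase x := mem_erase.2 ⟨hxz.symm, hz⟩
  have := card_le_card hsub
  have := card_pos.2 ⟨z, hz'⟩
  rw [card_erase_of_mem hz', card_erase_of_mem hx] at *
  omega

theorem mem_of_le_card_insert_erase_inter {T B : Finset α} {t : ℕ} {x y z : α}
    (hT : #T = t + 1) (hx : x ∈ T) (hz : z ∈ T) (hxz : x ≠ z) (hzB : z ∉ B) (hyT : y ∉ T)
    (h : t ≤ #(insert y (T.erase x) ∩ B)) : y ∈ B := by
  by_contra hyB
  refine (card_inter_lt_of_inter_subset hT hx hz hxz ?_ hzB ?_).not_ge h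
  · simp only [mem_insert, mem_erase, ne_eq, not_true_eq_false, false_and, or_false]
    exact fun hxy => hyT (hxy ▸ hx)
  · intro w hw
    obtain ⟨hw, hwB⟩ := mem_inter.1 hw
    rcases mem_insert.1 hw with rfl | hw
    · exact absurd hwB hyB
    · exact mem_of_mem_erase hw

theorem forall_eq_of_ne_apply_imp_eq {β : Type*} {s : Finset α} (hs : 3 ≤ #s) (f : α → β)
    (g : α → α) (h : ∀ x ∈ s, ∀ y ∈ s, x ≠ g y → f x = f y) : ∀ x ∈ s, ∀ y ∈ s, f x = f y := by
  intro x hx y hy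
  by_cases hxy : x = g y
  · by_cases hyx : y = g x
    · obtain ⟨w, hw⟩ : (s \ {x, y}).Nonempty := by
        have := le_card_sdiff {x, y} s
        have := card_le_two (a := x) (b := y)
        exact card_pos.1 (by omega)
      simp only [mem_sdiff, mem_insert, mem_singleton, not_or] at hw
      obtain ⟨hws, hwx, hwy⟩ := hw
      rw [← h w hws x hx (hyx ▸ hwy), h w hws y hy (hxy ▸ hwx)]
    · exact (h y hy x hx hyx).symm
  · exact h x hx y hy hxy

theorem image_perm_eq_self {σ : Equiv.Perm α} {S U : Finset α} (hU : U ⊆ S)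
    (hσ : ∀ x ∉ U, σ x = x) : S.image σ = S := by
  refine eq_of_subset_of_card_le (fun y hy => ?_) (card_image_of_injective _ σ.injective).ge
  obtain ⟨x, hx, rfl⟩ := mem_image.1 hy
  by_contra hσx
  rw [σ.injective (hσ (σ x) fun h => hσx (hU h))] at hσx
  exact hσx hx

end Finset

namespace Equiv.Perm

variable {α : Type*} [DecidableEq α]

theorem exists_image_eq_of_card_eq {A B : Finset α} (h : #A = #B) :
    ∃ σ : Perm α, A.image σ = B ∧ ∀ x ∉ A ∪ B, σ x = x := by
  induction A using Finset.induction_on generalizing B with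
  | empty =>
    rw [card_empty, eq_comm, card_eq_zero] at h
    exact ⟨1, by simp [h], fun _ _ => rfl⟩
  | insert a A haA ih =>
    rw [card_insert_of_notMem haA] at h
    -- Taking `b = a` when possible keeps `a` out of `B.erase b`, so `swap a b` fixes `B.erase b`.
    obtain ⟨b, hbB, hab⟩ : ∃ b ∈ B, a ∈ B → b = a := by
      by_cases haB : a ∈ B
      · exact ⟨a, haB, fun _ => rfl⟩
      · obtain ⟨b, hb⟩ := card_pos.1 (by omega : 0 < #B)
        exact ⟨b, hb, fun h => absurd h haB⟩
    have haB : a ∉ B.erase b := fun h' => (mem_erase.1 h').1 (hab (mem_of_mem_erase h')).symm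
    obtain ⟨σ, hσ, hfix⟩ := ih (B := B.erase b) (by rw [card_erase_of_mem hbB]; omega)
    have hσa : σ a = a := hfix a (by simp [haA, haB])
    have hswap : (B.erase b).image (swap a b) = B.erase b :=
      (image_congr fun y hy => swap_apply_of_ne_of_ne (ne_of_mem_of_not_mem hy haB)
        (mem_erase.1 hy).1).trans image_id
    refine ⟨swap a b * σ, ?_, fun x hx => ?_⟩
    · rw [coe_mul, ← image_image, image_insert, hσ, hσa, image_insert, swap_apply_left, hswap,
        insert_erase hbB]
    · simp only [mem_union, mem_insert, not_or] at hx
      rw [mul_apply, hfix x (by simp [hx.1.2, hx.2]),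
        swap_apply_of_ne_of_ne hx.1.1 fun h => hx.2 (h ▸ hbB)]

theorem exists_image_eq_image_eq {S T D T₀ D₀ : Finset α} (hTS : T ⊆ S) (hDS : D ⊆ S)
    (hT₀S : T₀ ⊆ S) (hD₀S : D₀ ⊆ S) (hTD : _root_.Disjoint T D) (hTD₀ : _root_.Disjoint T₀ D₀)
    (hT : #T = #T₀) (hD : #D = #D₀) :
    ∃ σ : Perm α, S.image σ = S ∧ T.image σ = T₀ ∧ D.image σ = D₀ := by
  obtain ⟨σ, hσT, hσ⟩ := exists_image_eq_of_card_eq hT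
  have hσS : S.image σ = S := image_perm_eq_self (union_subset hTS hT₀S) hσ
  obtain ⟨τ, hτD, hτ⟩ := exists_image_eq_of_card_eq (A := D.image σ) (B := D₀)
    (by rw [card_image_of_injective _ σ.injective, hD])
  have hDT₀ : _root_.Disjoint (D.image σ) T₀ := hσT ▸ (disjoint_image σ.injective).2 hTD.symm
  refine ⟨τ * σ, ?_, ?_, ?_⟩ <;> rw [coe_mul, ← image_image]
  · rw [hσS]
    exact image_perm_eq_self (union_subset (hσS ▸ image_subset_image hDS) hD₀S) hτ
  · rw [hσT]
    refine (image_congr fun x hx => hτ x ?_).trans image_id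
    simp only [mem_union, not_or]
    exact ⟨disjoint_right.1 hDT₀ hx, disjoint_left.1 hTD₀ hx⟩
  · rw [hτD]

end Equiv.Perm

def IsTCover (t : ℕ) (G : Finset (Finset ℕ)) (T : Finset ℕ) : Prop :=
  ∀ B ∈ G, t ≤ #(T ∩ B)

/-- `B x ∈ G` shows that `T \ {x}` is not a `t`-cover of `G`. -/
def IsBlocker (G : Finset (Finset ℕ)) (T : Finset ℕ) (B : ℕ → Finset ℕ) : Prop :=
  ∀ x ∈ T, B x ∈ G ∧ ∃ z ∈ T, z ≠ x ∧ T ∩ B x = T.erase z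

def exchanges (T : Finset ℕ) (B : ℕ → Finset ℕ) : Finset (Finset ℕ) :=
  (T.sigma fun x => B x \ T).image fun p => insert p.2 (T.erase p.1)

/-- `𝒞₁(ℓ,t)` and `𝒞₂(k,t;ℓ)` with `[t+1]` and `[t+2, ℓ+1]` replaced by `T` and `D`. -/
def famC1Of (S : Finset ℕ) (l : ℕ) (T D : Finset ℕ) : Finset (Finset ℕ) :=
  T.image (fun i => (T ∪ D).erase i) ∪ (ksubsets S l).filter (fun B => T ⊆ B)

def famC2Of (S : Finset ℕ) (k t : ℕ) (T D : Finset ℕ) : Finset (Finset ℕ) :=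
  (ksubsets S k).filter (fun A => #(A ∩ T) = t ∧ 1 ≤ #(A ∩ D)) ∪
  (ksubsets S k).filter (fun A => T ⊆ A)

theorem mem_ksubsets {S A : Finset ℕ} {k : ℕ} : A ∈ ksubsets S k ↔ A ⊆ S ∧ #A = k := by
  simp [ksubsets]

theorem mem_covers {n t : ℕ} {F : Finset (Finset ℕ)} {T : Finset ℕ} :
    T ∈ covers n t F ↔ T ⊆ Icc 1 n ∧ #T = t + 1 ∧ IsTCover t F T := by
  simp [covers, IsTCover]

theorem exists_card_inter_lt_of_card_lt_tau {n t : ℕ} {G : Finset (Finset ℕ)} {W : Finset ℕ}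
    (hW : W ⊆ Icc 1 n) (h : #W < tau n t G) : ∃ B ∈ G, #(W ∩ B) < t := by
  by_contra! hW'
  exact (Nat.sInf_le ⟨W, hW, rfl, hW'⟩ : tau n t G ≤ #W).not_gt h

section Maximal

variable {S : Finset ℕ} {k l t : ℕ} {F G : Finset (Finset ℕ)}

theorem maximalCrossIn.mem_left (hmax : maximalCrossIn S k l t F G) {A : Finset ℕ}
    (hA : A ∈ ksubsets S k) (hAG : ∀ B ∈ G, t ≤ #(A ∩ B)) : A ∈ F := by
  obtain ⟨hFk, hGl, hcross, hmaxP⟩ := hmax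
  have hcross' : crossInt t (insert A F) G := by
    rw [crossInt, forall_mem_insert]
    exact ⟨hAG, hcross⟩
  rw [(hmaxP _ G (insert_subset hA hFk) hGl hcross' (subset_insert A F) subset_rfl).1]
  exact mem_insert_self A F

/-- A `t`-cover `T'` of `G` extends to a `k`-set `A ∈ F` with `A ∩ T ⊆ T'`. -/
theorem maximalCrossIn.le_card_inter (hmax : maximalCrossIn S k l t F G) {T T' : Finset ℕ}
    (hTF : IsTCover t F T) (hTk : #T + k ≤ #S) (hT'S : T' ⊆ S) (hT'G : IsTCover t G T')
    (hT'k : #T' ≤ k) : t ≤ #(T ∩ T') := by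
  have hroom : k ≤ #(S \ (T \ T')) := by
    have := le_card_sdiff (T \ T') S
    have := card_le_card (sdiff_subset : T \ T' ⊆ T)
    omega
  obtain ⟨A, hT'A, hAS, hAk⟩ :=
    exists_subsuperset_card_eq (subset_sdiff.2 ⟨hT'S, disjoint_sdiff⟩) hT'k hroom
  have hAF : A ∈ F := hmax.mem_left (mem_ksubsets.2 ⟨hAS.trans sdiff_subset, hAk⟩)
    fun B hB => (hT'G B hB).trans (card_le_card (inter_subset_inter hT'A subset_rfl))
  refine (hTF A hAF).trans (card_le_card fun w hw => ?_)
  obtain ⟨hwT, hwA⟩ := mem_inter.1 hw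
  by_contra hwT'
  exact (mem_sdiff.1 (hAS hwA)).2 (mem_sdiff.2 ⟨hwT, fun h => hwT' (mem_inter.2 ⟨hwT, h⟩)⟩)

end Maximal

section Covers

variable {n k l t : ℕ} {F G : Finset (Finset ℕ)} {T : Finset ℕ} {B : ℕ → Finset ℕ}

theorem exists_isBlocker (htG : tau n t G = t + 1) (hTG : T ∈ covers n t G) :
    ∃ B, IsBlocker G T B := by
  obtain ⟨hTS, hT, hTcov⟩ := mem_covers.1 hTG
  have : ∀ x ∈ T, ∃ Bx ∈ G, ∃ z ∈ T, z ≠ x ∧ T ∩ Bx = T.erase z := by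
    intro x hx
    obtain ⟨Bx, hBx, hlt⟩ := exists_card_inter_lt_of_card_lt_tau
      ((erase_subset x T).trans hTS) (by rw [card_erase_of_mem hx, htG, hT]; omega)
    have hnsub : ¬ T.erase x ⊆ Bx := fun h => by
      rw [inter_eq_left.2 h, card_erase_of_mem hx, hT] at hlt
      omega
    rcases subset_or_exists_inter_eq_erase hT (hTcov Bx hBx) with hTB | ⟨z, hz, hTB⟩
    · exact absurd ((erase_subset x T).trans hTB) hnsub
    · refine ⟨Bx, hBx, z, hz, ?_, hTB⟩
      rintro rfl
      exact hnsub (hTB ▸ inter_subset_right)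
  choose! B hB using this
  exact ⟨B, hB⟩

theorem IsBlocker.card_sdiff {S : Finset ℕ} (hB : IsBlocker G T B) (hGl : G ⊆ ksubsets S l)
    (hT : #T = t + 1) {x : ℕ} (hx : x ∈ T) : #(B x \ T) = l - t := by
  obtain ⟨hBG, z, hz, -, hTB⟩ := hB x hx
  rw [Finset.card_sdiff, hTB, card_erase_of_mem hz, hT, (mem_ksubsets.1 (hGl hBG)).2,
    Nat.add_sub_cancel]

theorem covers_subset_insert_exchanges (hmax : maximalCrossIn (Iv 1 n) k l t F G)
    (hk : t + 1 ≤ k) (hkn : k + t + 1 ≤ n) (hTF : T ∈ covers n t F) (hB : IsBlocker G T B) :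
    covers n t G ⊆ insert T (exchanges T B) := by
  obtain ⟨-, hT, hTcov⟩ := mem_covers.1 hTF
  intro T' hT'
  obtain ⟨hT'S, hT'card, hT'cov⟩ := mem_covers.1 hT'
  have hle := hmax.le_card_inter hTcov (by simp [Iv]; omega) hT'S hT'cov (by omega)
  rcases subset_or_exists_inter_eq_erase hT hle with hTT' | ⟨x, hx, hTx⟩
  · exact mem_insert.2 (Or.inl (eq_of_subset_of_card_le hTT' (by omega)).symm)
  obtain ⟨y, hyT, rfl⟩ := exists_eq_insert_erase_of_inter_eq_erase hx (hT'card.trans hT.symm) hTx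
  obtain ⟨hBG, z, hz, hzx, hTB⟩ := hB x hx
  have hy : y ∈ B x := mem_of_le_card_insert_erase_inter hT hx hz hzx.symm
    (notMem_of_inter_eq_erase hz hTB) hyT (hT'cov _ hBG)
  exact mem_insert_of_mem (mem_image.2 ⟨⟨x, y⟩, mem_sigma.2 ⟨hx, mem_sdiff.2 ⟨hy, hyT⟩⟩, rfl⟩)

theorem card_insert_exchanges_le {S : Finset ℕ} (hB : IsBlocker G T B) (hGl : G ⊆ ksubsets S l)
    (hT : #T = t + 1) : #(insert T (exchanges T B)) ≤ (t + 1) * (l - t) + 1 :=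
  calc #(insert T (exchanges T B)) ≤ #(exchanges T B) + 1 := card_insert_le _ _
    _ ≤ ∑ x ∈ T, #(B x \ T) + 1 := by
      gcongr
      exact card_image_le.trans (card_sigma _ _).le
    _ = (t + 1) * (l - t) + 1 := by
      rw [sum_congr rfl fun x hx => hB.card_sdiff hGl hT hx, sum_const, smul_eq_mul, hT]

theorem IsBlocker.sdiff_eq_sdiff {S : Finset ℕ} (hB : IsBlocker G T B) (hGl : G ⊆ ksubsets S l)
    (hT : #T = t + 1) (ht : 2 ≤ t)
    (hcov : ∀ x ∈ T, ∀ y ∈ B x \ T, IsTCover t G (insert y (T.erase x))) :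
    ∀ x ∈ T, ∀ x' ∈ T, B x \ T = B x' \ T := by
  choose! z hz hzx hTB using fun x hx => (hB x hx).2
  refine forall_eq_of_ne_apply_imp_eq (by omega) (fun x => B x \ T) z fun x hx x' hx' hxz => ?_
  refine eq_of_subset_of_card_le (fun y hy => mem_sdiff.2 ⟨?_, (mem_sdiff.1 hy).2⟩)
    (by rw [hB.card_sdiff hGl hT hx, hB.card_sdiff hGl hT hx'])
  exact mem_of_le_card_insert_erase_inter hT hx (hz x' hx') hxz
    (notMem_of_inter_eq_erase (hz x' hx') (hTB x' hx')) (mem_sdiff.1 hy).2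
    (hcov x hx y hy _ (hB x' hx').1)

end Covers

section Structure

variable {S : Finset ℕ} {k l t : ℕ} {F G : Finset (Finset ℕ)} {T D : Finset ℕ}

theorem subset_famC1Of (hGl : G ⊆ ksubsets S l) (hT : #T = t + 1) (ht : 1 ≤ t)
    (hTG : IsTCover t G T) (hTD : Disjoint T D) (hD : #D = l - t)
    (hcov : ∀ x ∈ T, ∀ y ∈ D, IsTCover t G (insert y (T.erase x))) :
    G ⊆ famC1Of S l T D := by
  intro B hB
  rcases subset_or_exists_inter_eq_erase hT (hTG B hB) with hTB | ⟨z, hz, hTB⟩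
  · exact mem_union_right _ (mem_filter.2 ⟨hGl hB, hTB⟩)
  refine mem_union_left _ (mem_image.2 ⟨z, hz, ?_⟩)
  obtain ⟨x, hx⟩ : (T.erase z).Nonempty := card_pos.1 (by rw [card_erase_of_mem hz]; omega)
  have hDB : D ⊆ B := fun y hy =>
    mem_of_le_card_insert_erase_inter hT (mem_of_mem_erase hx) hz (ne_of_mem_erase hx)
      (notMem_of_inter_eq_erase hz hTB) (disjoint_right.1 hTD hy)
      (hcov x (mem_of_mem_erase hx) y hy B hB)
  have hsub : (T ∪ D).erase z ⊆ B := fun w hw => by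
    obtain ⟨hwz, hw⟩ := mem_erase.1 hw
    rcases mem_union.1 hw with hwT | hwD
    · exact (mem_inter.1 (hTB ▸ mem_erase.2 ⟨hwz, hwT⟩ : w ∈ T ∩ B)).2
    · exact hDB hwD
  have htl : t ≤ l := by
    have := card_le_card (inter_subset_right : T ∩ B ⊆ B)
    rw [hTB, card_erase_of_mem hz, (mem_ksubsets.1 (hGl hB)).2] at this
    omega
  refine eq_of_subset_of_card_le hsub ?_
  rw [card_erase_of_mem (mem_union_left _ hz), card_union_of_disjoint hTD,
    (mem_ksubsets.1 (hGl hB)).2]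
  omega

theorem subset_famC2Of {B : ℕ → Finset ℕ} (hFk : F ⊆ ksubsets S k) (hT : #T = t + 1)
    (hTF : IsTCover t F T) (hcross : crossInt t F G) (hB : IsBlocker G T B)
    (hBD : ∀ x ∈ T, B x \ T = D) : F ⊆ famC2Of S k t T D := by
  intro A hA
  rcases subset_or_exists_inter_eq_erase hT (hTF A hA) with hTA | ⟨x, hx, hTA⟩
  · exact mem_union_right _ (mem_filter.2 ⟨hFk hA, hTA⟩)
  refine mem_union_left _ (mem_filter.2 ⟨hFk hA, ?_, ?_⟩)
  · rw [inter_comm, hTA, card_erase_of_mem hx, hT, Nat.add_sub_cancel]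
  by_contra hAD
  obtain ⟨hBG, z, hz, hzx, hTB⟩ := hB x hx
  have hsub : A ∩ B x ⊆ T := fun w hw => by
    by_contra hwT
    have hwD : w ∈ D := hBD x hx ▸ mem_sdiff.2 ⟨(mem_inter.1 hw).2, hwT⟩
    exact hAD (card_pos.2 ⟨w, mem_inter.2 ⟨(mem_inter.1 hw).1, hwD⟩⟩)
  exact (card_inter_lt_of_inter_subset hT hx hz hzx.symm (notMem_of_inter_eq_erase hx hTA)
    (notMem_of_inter_eq_erase hz hTB) hsub).not_ge (hcross A hA _ hBG)

theorem crossInt_famC2Of_famC1Of (hT : #T = t + 1) (hTD : Disjoint T D) :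
    crossInt t (famC2Of S k t T D) (famC1Of S l T D) := by
  intro A hA B hB
  simp only [famC2Of, famC1Of, mem_union, mem_filter, mem_image] at hA hB
  rcases hA with ⟨-, hAT, hAD⟩ | ⟨-, hTA⟩ <;> rcases hB with ⟨z, hz, rfl⟩ | ⟨-, hTB⟩
  · obtain ⟨y, hy⟩ := card_pos.1 hAD
    have hyT : y ∉ (A ∩ T).erase z := fun h =>
      disjoint_left.1 hTD (mem_inter.1 (mem_of_mem_erase h)).2 (mem_inter.1 hy).2
    have hsub : insert y ((A ∩ T).erase z) ⊆ A ∩ (T ∪ D).erase z := by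
      refine insert_subset (mem_inter.2 ⟨(mem_inter.1 hy).1, mem_erase.2 ⟨?_, ?_⟩⟩) fun w hw => ?_
      · rintro rfl
        exact disjoint_left.1 hTD hz (mem_inter.1 hy).2
      · exact mem_union_right _ (mem_inter.1 hy).2
      · obtain ⟨hwz, hw⟩ := mem_erase.1 hw
        exact mem_inter.2 ⟨(mem_inter.1 hw).1,
          mem_erase.2 ⟨hwz, mem_union_left _ (mem_inter.1 hw).2⟩⟩
    have := card_le_card hsub
    have := pred_card_le_card_erase (s := A ∩ T) (a := z)
    rw [card_insert_of_notMem hyT] at *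
    omega
  · exact hAT ▸ card_le_card (inter_subset_inter_left hTB)
  · have hsub : T.erase z ⊆ A ∩ (T ∪ D).erase z := fun w hw =>
      mem_inter.2 ⟨hTA (mem_of_mem_erase hw), erase_subset_erase z subset_union_left hw⟩
    have := card_le_card hsub
    rwa [card_erase_of_mem hz, hT, Nat.add_sub_cancel] at this
  · have := card_le_card (subset_inter hTA hTB)
    omega

theorem famC1Of_subset_ksubsets (hTS : T ⊆ S) (hDS : D ⊆ S) (hTD : Disjoint T D)
    (hcard : #T + #D = l + 1) : famC1Of S l T D ⊆ ksubsets S l := by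
  refine union_subset (image_subset_iff.2 fun z hz => mem_ksubsets.2 ⟨?_, ?_⟩) (filter_subset _ _)
  · exact (erase_subset _ _).trans (union_subset hTS hDS)
  · rw [card_erase_of_mem (mem_union_left _ hz), card_union_of_disjoint hTD]
    omega

theorem famC2Of_subset_ksubsets : famC2Of S k t T D ⊆ ksubsets S k :=
  union_subset (filter_subset _ _) (filter_subset _ _)

end Structure

section Transport

variable {σ : Equiv.Perm ℕ} {S : Finset ℕ}

theorem mapFam_union (X Y : Finset (Finset ℕ)) : mapFam σ (X ∪ Y) = mapFam σ X ∪ mapFam σ Y :=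
  image_union _ _

theorem mapFam_filter {X : Finset (Finset ℕ)} {p q : Finset ℕ → Prop} [DecidablePred p]
    [DecidablePred q] (hpq : ∀ A ∈ X, p A ↔ q (A.image σ)) :
    mapFam σ (X.filter p) = (mapFam σ X).filter q := by
  rw [mapFam, mapFam, filter_image, filter_congr hpq]

theorem mapFam_ksubsets (hσ : S.image σ = S) (k : ℕ) : mapFam σ (ksubsets S k) = ksubsets S k := by
  ext B
  simp only [mapFam, mem_image, mem_ksubsets]
  constructor
  · rintro ⟨A, ⟨hAS, rfl⟩, rfl⟩
    exact ⟨hσ ▸ image_subset_image hAS, card_image_of_injective _ σ.injective⟩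
  · rintro ⟨hBS, rfl⟩
    have hB : (B.image σ.symm).image σ = B := by
      rw [image_image, σ.self_comp_symm, image_id]
    refine ⟨B.image σ.symm, ⟨?_, card_image_of_injective _ σ.symm.injective⟩, hB⟩
    rw [← image_subset_image_iff σ.injective, hB, hσ]
    exact hBS

theorem mapFam_famC1Of (hσ : S.image σ = S) (l : ℕ) (T D : Finset ℕ) :
    mapFam σ (famC1Of S l T D) = famC1Of S l (T.image σ) (D.image σ) := by
  rw [famC1Of, famC1Of, mapFam_union, mapFam_filter (q := fun B => T.image σ ⊆ B)
    fun A _ => (image_subset_image_iff σ.injective).symm, mapFam_ksubsets hσ, mapFam,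
    image_image, image_image]
  congr 1
  refine image_congr fun i _ => ?_
  simp [image_erase σ.injective, image_union]

theorem mapFam_famC2Of (hσ : S.image σ = S) (k t : ℕ) (T D : Finset ℕ) :
    mapFam σ (famC2Of S k t T D) = famC2Of S k t (T.image σ) (D.image σ) := by
  have hcard (A C : Finset ℕ) : #(A.image σ ∩ C.image σ) = #(A ∩ C) := by
    rw [← image_inter _ _ σ.injective, card_image_of_injective _ σ.injective]
  rw [famC2Of, famC2Of, mapFam_union, mapFam_filter (q := fun A => T.image σ ⊆ A)
    fun A _ => (image_subset_image_iff σ.injective).symm, mapFam_filter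
    (q := fun A => #(A ∩ T.image σ) = t ∧ 1 ≤ #(A ∩ D.image σ)) fun A _ => by
      rw [hcard, hcard], mapFam_ksubsets hσ]

end Transport

theorem famC1_eq_famC1Of {n l t : ℕ} (htl : t ≤ l) :
    famC1 n l t = famC1Of (Iv 1 n) l (Iv 1 (t + 1)) (Iv (t + 2) (l + 1)) := by
  have hunion : Iv 1 (t + 1) ∪ Iv (t + 2) (l + 1) = Iv 1 (l + 1) := by
    ext x
    simp only [Iv, mem_union, mem_Icc]
    omega
  rw [famC1Of, hunion]
  rfl

theorem isoPair_famC2Of_famC1Of {n k l t : ℕ} {T D : Finset ℕ} (htl : t ≤ l) (hln : l + 1 ≤ n)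
    (hTS : T ⊆ Icc 1 n) (hDS : D ⊆ Icc 1 n) (hTD : Disjoint T D) (hT : #T = t + 1)
    (hD : #D = l - t) :
    isoPair n (famC2Of (Iv 1 n) k t T D) (famC1Of (Iv 1 n) l T D) (famC2 n k t l)
      (famC1 n l t) := by
  obtain ⟨σ, hσS, hσT, hσD⟩ := Equiv.Perm.exists_image_eq_image_eq (S := Iv 1 n)
    (T₀ := Iv 1 (t + 1)) (D₀ := Iv (t + 2) (l + 1)) hTS hDS
    (fun x hx => by simp only [Iv, mem_Icc] at hx ⊢; omega)
    (fun x hx => by simp only [Iv, mem_Icc] at hx ⊢; omega)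
    hTD (disjoint_left.2 fun x hx hx' => by simp only [Iv, mem_Icc] at hx hx'; omega)
    (by simp [Iv, hT]) (by simp only [Iv, Nat.card_Icc, hD]; omega)
  refine ⟨σ, fun x hx => (hσS ▸ mem_image_of_mem σ hx : σ x ∈ Iv 1 n), ?_, ?_⟩
  · rw [mapFam_famC2Of hσS, hσT, hσD]
    rfl
  · rw [mapFam_famC1Of hσS, hσT, hσD, famC1_eq_famC1Of htl]

theorem exists_eq_famC2Of_famC1Of {n k l t : ℕ} {F G : Finset (Finset ℕ)} {T : Finset ℕ}
    {B : ℕ → Finset ℕ} (hmax : maximalCrossIn (Iv 1 n) k l t F G) (ht : 2 ≤ t) (htl : t ≤ l)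
    (hTF : T ∈ covers n t F) (hB : IsBlocker G T B)
    (hcovers : covers n t G = insert T (exchanges T B)) :
    ∃ D ⊆ Icc 1 n, Disjoint T D ∧ #D = l - t ∧
      F = famC2Of (Iv 1 n) k t T D ∧ G = famC1Of (Iv 1 n) l T D := by
  obtain ⟨hTS, hT, hTcovF⟩ := mem_covers.1 hTF
  obtain ⟨-, -, hTcovG⟩ := mem_covers.1 (hcovers ▸ mem_insert_self T _)
  obtain ⟨hFk, hGl, hcross, hmaxP⟩ := hmax
  have hex : ∀ x ∈ T, ∀ y ∈ B x \ T, IsTCover t G (insert y (T.erase x)) := fun x hx y hy =>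
    (mem_covers.1 (show insert y (T.erase x) ∈ covers n t G from hcovers ▸
      mem_insert_of_mem (mem_image.2 ⟨⟨x, y⟩, mem_sigma.2 ⟨hx, hy⟩, rfl⟩))).2.2
  obtain ⟨x₀, hx₀⟩ : T.Nonempty := card_pos.1 (by omega)
  have hBD : ∀ x ∈ T, B x \ T = B x₀ \ T := fun x hx =>
    hB.sdiff_eq_sdiff hGl hT ht hex x hx x₀ hx₀
  have hD : #(B x₀ \ T) = l - t := hB.card_sdiff hGl hT hx₀
  have hG := subset_famC1Of hGl hT (by omega) hTcovG disjoint_sdiff hD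
    fun x hx y hy => hex x hx y (hBD x hx ▸ hy)
  have hF := subset_famC2Of hFk hT hTcovF hcross hB hBD
  have hDS : B x₀ \ T ⊆ Icc 1 n := sdiff_subset.trans (mem_ksubsets.1 (hGl (hB x₀ hx₀).1)).1
  refine ⟨B x₀ \ T, hDS, disjoint_sdiff, hD, hmaxP _ _ famC2Of_subset_ksubsets
    (famC1Of_subset_ksubsets hTS hDS disjoint_sdiff ?_) (crossInt_famC2Of_famC1Of hT disjoint_sdiff)
    hF hG⟩
  omega

theorem single_cover_contained_general
    (n k l t : ℕ) (hk : t + 1 ≤ k) (hl : t + 1 ≤ l)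
    (hn : (t+1)^2 * (k+l)^2 * (k - t + 1) * (l - t + 1) + k + l - t ≤ n)
    (F G : Finset (Finset ℕ))
    (hmax : maximalCrossIn (Iv 1 n) k l t F G)
    (htG : tau n t G = t + 1)
    (hTf : (covers n t F).card = 1)
    (hsub : covers n t F ⊆ covers n t G) :
    (covers n t G).card ≤ (t + 1) * (l - t) + 1 ∧
    (2 ≤ t → (covers n t G).card = (t + 1) * (l - t) + 1 →
      isoPair n F G (famC2 n k t l) (famC1 n l t)) := by
  have hkl : k + l ≤ (t+1)^2 * (k+l)^2 * (k - t + 1) * (l - t + 1) := by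
    have h1 : k + l ≤ (k + l) ^ 2 := Nat.le_self_pow two_ne_zero _
    have h2 : 1 ≤ (t + 1) ^ 2 * (k - t + 1) * (l - t + 1) :=
      Nat.one_le_iff_ne_zero.2 (by positivity)
    nlinarith
  obtain ⟨T, hT⟩ := card_eq_one.1 hTf
  have hTF : T ∈ covers n t F := hT ▸ mem_singleton_self T
  obtain ⟨B, hB⟩ := exists_isBlocker htG (hsub hTF)
  have hcovers := covers_subset_insert_exchanges hmax hk (by omega) hTF hB
  have hbound := card_insert_exchanges_le hB hmax.2.1 (mem_covers.1 hTF).2.1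
  refine ⟨(card_le_card hcovers).trans hbound, fun ht hcard => ?_⟩
  obtain ⟨D, hDS, hTD, hD, rfl, rfl⟩ := exists_eq_famC2Of_famC1Of hmax ht (by omega) hTF hB
    (eq_of_subset_of_card_le hcovers (hbound.trans hcard.ge))
  exact isoPair_famC2Of_famC1Of (by omega) (by omega) (mem_covers.1 hTF).1 hDS hTD
    (mem_covers.1 hTF).2.1 hD

/-- Lemma 2.6(ii). -/
theorem single_cover_contained
    (n k l t : ℕ) (hn0 : 0 < n) (ht0 : 0 < t) (hk : t + 1 ≤ k) (hl : t + 1 ≤ l)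
    (hn : (t+1)^2 * (k+l)^2 * (k - t + 1) * (l - t + 1) + k + l - t ≤ n)
    (F G : Finset (Finset ℕ))
    (hmax : maximalCrossIn (Iv 1 n) k l t F G)
    (htF : tau n t F = t + 1) (htG : tau n t G = t + 1)
    (hTg : ¬ crossInt t (covers n t G) (covers n t G))
    (hTf : (covers n t F).card = 1)
    (hsub : covers n t F ⊆ covers n t G) :
    (covers n t G).card ≤ (t + 1) * (l - t) + 1 ∧
    (2 ≤ t → (covers n t G).card = (t + 1) * (l - t) + 1 →
      isoPair n F G (famC2 n k t l) (famC1 n l t)) :=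
  single_cover_contained_general n k l t hk hl hn F G hmax htG hTf hsub
end

section
/- Let n, k, ℓ, t be positive integers with k ≥ t+1, ℓ ≥ t+2 and n ≥ (t+1)²(k+ℓ)²(k−t+1)(ℓ−t+1)+k+ℓ−t. Then: (i) g(2(ℓ−t+1), k, ℓ, t)·g(1, ℓ, k, t) < h(k,ℓ,t)·h(ℓ,k,t); (ii) g(ℓ−t, k, ℓ, t)·g(k−t+1, ℓ, k, t) < h(k,ℓ,t)·h(ℓ,k,t); (iii) if additionally t = 1, then g(ℓ, k, ℓ, 1)·g(2, ℓ, k, 1) < h(k,ℓ,1)·h(ℓ,k,1). -/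
set_option maxHeartbeats 1000000

lemma ch_natCast (p q : ℕ) : ch (p : ℤ) (q : ℤ) = (p.choose q : ℤ) := by
  unfold ch
  split
  · simp
  · next h =>
    push_neg at h
    have hq : p < q := by exact_mod_cast h (by positivity)
    rw [Nat.choose_eq_zero_of_lt hq]
    simp

lemma ch_of_neg {a b : ℤ} (h : ¬(0 ≤ b ∧ b ≤ a)) : ch a b = 0 := by
  unfold ch; rw [if_neg h]

lemma ch_nonneg (a b : ℤ) : 0 ≤ ch a b := by
  unfold ch; split <;> positivity

lemma ch_one_le {a b : ℤ} (h0 : 0 ≤ b) (hab : b ≤ a) : 1 ≤ ch a b := by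
  have ha : 0 ≤ a := le_trans h0 hab
  lift b to ℕ using h0
  lift a to ℕ using ha
  rw [ch_natCast]
  exact_mod_cast Nat.choose_pos (by exact_mod_cast hab)

lemma ch_zero_right {a : ℤ} (h : 0 ≤ a) : ch a 0 = 1 := by
  lift a to ℕ using h
  simpa using ch_natCast a 0

lemma ch_one_right {a : ℤ} (h : 0 ≤ a) : ch a 1 = a := by
  lift a to ℕ using h
  have := ch_natCast a 1
  simp [Nat.choose_one_right] at this
  simpa using this

lemma ch_mono {a a' : ℤ} (h0 : 0 ≤ a) (h : a ≤ a') (b : ℤ) : ch a b ≤ ch a' b := by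
  rcases le_or_gt 0 b with hb | hb
  · have ha' : 0 ≤ a' := le_trans h0 h
    lift b to ℕ using hb
    lift a to ℕ using h0
    lift a' to ℕ using ha' 
    rw [ch_natCast, ch_natCast]
    exact_mod_cast Nat.choose_le_choose b (by exact_mod_cast h)
  · rw [ch_of_neg (by omega), ch_of_neg (by omega)]

lemma ch_pascal {a r : ℤ} (ha : 0 ≤ a) (hr : 1 ≤ r) : ch (a+1) r = ch a (r-1) + ch a r := by
  lift a to ℕ using ha
  obtain ⟨q, rfl⟩ : ∃ q : ℕ, r = (q : ℤ) + 1 := ⟨(r-1).toNat, by omega⟩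
  have e1 : (a : ℤ) + 1 = ((a+1 : ℕ) : ℤ) := by push_cast; ring
  have e2 : (q : ℤ) + 1 = ((q+1 : ℕ) : ℤ) := by push_cast; ring
  rw [e1, e2, ch_natCast, show ((q+1:ℕ):ℤ) - 1 = (q:ℤ) by push_cast; ring, ch_natCast, ch_natCast]
  rw [Nat.choose_succ_succ]
  push_cast; ring

lemma ch_id {a b : ℤ} (h0 : 0 ≤ b) (hab : b ≤ a) : b * ch a b = a * ch (a-1) (b-1) := by
  rcases eq_or_lt_of_le h0 with hb0 | hb1
  · rw [← hb0, show (0:ℤ)-1 = -1 by ring, ch_of_neg (by omega : ¬((0:ℤ) ≤ -1 ∧ -1 ≤ a - 1))]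
    ring
  · obtain ⟨q, rfl⟩ : ∃ q : ℕ, b = (q : ℤ) + 1 := ⟨(b-1).toNat, by omega⟩
    obtain ⟨p, rfl⟩ : ∃ p : ℕ, a = (p : ℤ) + 1 := ⟨(a-1).toNat, by omega⟩
    have e1 : (p : ℤ) + 1 = ((p+1 : ℕ) : ℤ) := by push_cast; ring
    have e2 : (q : ℤ) + 1 = ((q+1 : ℕ) : ℤ) := by push_cast; ring
    rw [e1, e2, ch_natCast, show ((p+1:ℕ):ℤ) - 1 = (p:ℤ) by push_cast; ring,
      show ((q+1:ℕ):ℤ) - 1 = (q:ℤ) by push_cast; ring, ch_natCast]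
    have hnat : (q+1) * (p+1).choose (q+1) = (p+1) * p.choose q := by
      simpa [Nat.succ_eq_add_one, mul_comm] using (Nat.add_one_mul_choose_eq p q).symm
    exact_mod_cast hnat

lemma tele_upper_nat (p r : ℕ) : ∀ d : ℕ, ((p+d).choose (r+1) : ℤ) - p.choose (r+1) ≤ d * ((p+d-1).choose r : ℤ)
  | 0 => by simp
  | (d+1) => by
    have ih := tele_upper_nat p r d
    have pas : (p+(d+1)).choose (r+1) = (p+d).choose r + (p+d).choose (r+1) := by
      rw [show p+(d+1) = (p+d)+1 by ring, Nat.choose_succ_succ]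
    have mono : ((p+d-1).choose r : ℤ) ≤ ((p+d).choose r : ℤ) := by
      exact_mod_cast Nat.choose_le_choose r (by omega)
    have e : p + (d+1) - 1 = p + d := by omega
    rw [pas, e]
    have hd : (0:ℤ) ≤ (d:ℤ) := by positivity
    have hm : (d:ℤ) * ((p+d-1).choose r : ℤ) ≤ (d:ℤ) * ((p+d).choose r : ℤ) :=
      mul_le_mul_of_nonneg_left mono hd
    push_cast
    linarith

lemma tele_lower_nat (p r : ℕ) : ∀ d : ℕ, (d : ℤ) * (p.choose r : ℤ) ≤ ((p+d).choose (r+1) : ℤ) - p.choose (r+1)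
  | 0 => by simp
  | (d+1) => by
    have ih := tele_lower_nat p r d
    have pas : (p+(d+1)).choose (r+1) = (p+d).choose r + (p+d).choose (r+1) := by
      rw [show p+(d+1) = (p+d)+1 by ring, Nat.choose_succ_succ]
    have mono : ((p).choose r : ℤ) ≤ ((p+d).choose r : ℤ) := by
      exact_mod_cast Nat.choose_le_choose r (by omega)
    rw [pas]
    push_cast
    linarith

lemma ch_tele_upper {a a' r : ℤ} (h0 : 0 ≤ a') (h : a' ≤ a) (hr : 0 ≤ r) :
    ch a r - ch a' r ≤ (a - a') * ch (a-1) (r-1) := by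
  rcases eq_or_lt_of_le hr with hr0 | hr1
  · rw [← hr0, ch_zero_right (le_trans h0 h), ch_zero_right h0, ch_of_neg (by omega)]
    simp
  · lift a' to ℕ using h0
    obtain ⟨q, rfl⟩ : ∃ q : ℕ, r = (q : ℤ) + 1 := ⟨(r-1).toNat, by omega⟩
    obtain ⟨d, rfl⟩ : ∃ d : ℕ, a = (a' : ℤ) + d := ⟨(a - a').toNat, by omega⟩
    rcases Nat.eq_zero_or_pos d with rfl | hd
    · simp
    · have key := tele_upper_nat a' q d
      have e1 : (a':ℤ) + d = ((a'+d : ℕ) : ℤ) := by push_cast; ring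
      have e2 : (q:ℤ) + 1 = ((q+1:ℕ):ℤ) := by push_cast; ring
      have e3 : (a':ℤ) + d - 1 = ((a'+d-1 : ℕ) : ℤ) := by
        have h1 : (1:ℕ) ≤ a'+d := by omega
        push_cast [h1]; ring
      have e4 : (q:ℤ) + 1 - 1 = ((q:ℕ):ℤ) := by push_cast; ring
      rw [show (a':ℤ) + (d:ℤ) - (a':ℤ) = ((d:ℕ):ℤ) by push_cast; ring, e4, e3, e1, e2,
        ch_natCast, ch_natCast, ch_natCast]
      exact key

lemma ch_tele_lower {a a' r : ℤ} (h0 : 0 ≤ a') (h : a' ≤ a) (hr : 0 ≤ r) :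
    (a - a') * ch a' (r-1) ≤ ch a r - ch a' r := by
  rcases eq_or_lt_of_le hr with hr0 | hr1
  · rw [← hr0, ch_zero_right (le_trans h0 h), ch_zero_right h0, ch_of_neg (by omega)]
    simp
  · lift a' to ℕ using h0
    obtain ⟨q, rfl⟩ : ∃ q : ℕ, r = (q : ℤ) + 1 := ⟨(r-1).toNat, by omega⟩
    obtain ⟨d, rfl⟩ : ∃ d : ℕ, a = (a' : ℤ) + d := ⟨(a - a').toNat, by omega⟩
    have key := tele_lower_nat a' q d
    have e1 : (a':ℤ) + d = ((a'+d : ℕ) : ℤ) := by push_cast; ring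
    have e2 : (q:ℤ) + 1 = ((q+1:ℕ):ℤ) := by push_cast; ring
    have e4 : (q:ℤ) + 1 - 1 = ((q:ℕ):ℤ) := by push_cast; ring
    rw [show (a':ℤ) + (d:ℤ) - (a':ℤ) = ((d:ℕ):ℤ) by push_cast; ring, e4, e1, e2,
      ch_natCast, ch_natCast, ch_natCast]
    exact key

lemma combine (N K L A A' B B' s m1 m2 cl ck H1 H2 : ℤ)
    (hA1 : 1 ≤ A) (hB1 : 1 ≤ B) (hA' : 0 ≤ A') (hB' : 0 ≤ B')
    (eA : K * A = N * A') (eB : L * B = N * B')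
    (hs : 0 ≤ s) (hm1 : 0 ≤ m1) (hm2 : 0 ≤ m2) (hcl : 0 ≤ cl) (hck : 0 ≤ ck)
    (hK : 0 ≤ K) (hL : 0 ≤ L) (hN : 0 < N)
    (h1 : 0 ≤ N - (L+1)*K) (h2 : 0 ≤ N - (K+1)*L)
    (key : (m1*N + cl*K) * (m2*N + ck*L) < (L+2)*(K+2)*((N-(L+1)*K)*(N-(K+1)*L)))
    (hH1 : (L+2)*(A - (L+1)*A') + s ≤ H1) (hH2 : (K+2)*(B - (K+1)*B') + s ≤ H2) :
    (m1*A + cl*A') * (m2*B + ck*B') < H1 * H2 := by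
  have l1 : N*(m1*A + cl*A') = (m1*N + cl*K)*A := by linear_combination (-cl) * eA
  have l2 : N*(m2*B + ck*B') = (m2*N + ck*L)*B := by linear_combination (-ck) * eB
  have c1A : 0 ≤ (m1*N + cl*K) :=
    add_nonneg (mul_nonneg hm1 hN.le) (mul_nonneg hcl hK)
  have c1B : 0 ≤ (m2*N + ck*L) :=
    add_nonneg (mul_nonneg hm2 hN.le) (mul_nonneg hck hL)
  have hA0 : (0:ℤ) ≤ A := by linarith
  have hB0 : (0:ℤ) ≤ B := by linarith
  -- lower bounds for N*H1, N*H2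
  have r1 : (L+2)*(N-(L+1)*K)*A + s*N ≤ N*H1 := by
    have := mul_le_mul_of_nonneg_left hH1 hN.le
    calc (L+2)*(N-(L+1)*K)*A + s*N = N*((L+2)*(A - (L+1)*A') + s) := by
          linear_combination (-(L+2)*(L+1)) * eA
      _ ≤ N*H1 := this
  have r2 : (K+2)*(N-(K+1)*L)*B + s*N ≤ N*H2 := by
    have := mul_le_mul_of_nonneg_left hH2 hN.le
    calc (K+2)*(N-(K+1)*L)*B + s*N = N*((K+2)*(B - (K+1)*B') + s) := by
          linear_combination (-(K+2)*(K+1)) * eB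
      _ ≤ N*H2 := this
  have p1 : 0 ≤ (L+2)*(N-(L+1)*K)*A := by
    apply mul_nonneg (mul_nonneg (by linarith) h1) hA0
  have p2 : 0 ≤ (K+2)*(N-(K+1)*L)*B := by
    apply mul_nonneg (mul_nonneg (by linarith) h2) hB0
  have sN : 0 ≤ s*N := mul_nonneg hs hN.le
  have rr : ((L+2)*(N-(L+1)*K)*A) * ((K+2)*(N-(K+1)*L)*B) ≤ (N*H1) * (N*H2) := by
    apply mul_le_mul (by linarith) (by linarith) p2 (by linarith)
  have hAB : (1:ℤ) ≤ A*B := by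
    have := mul_le_mul hA1 hB1 (by norm_num) hA0
    linarith
  have step : (m1*N + cl*K)*(m2*N + ck*L)*(A*B)
      < (L+2)*(K+2)*((N-(L+1)*K)*(N-(K+1)*L))*(A*B) := by
    have d1 : (0:ℤ) ≤ (L+2)*(K+2)*((N-(L+1)*K)*(N-(K+1)*L)) - (m1*N + cl*K)*(m2*N + ck*L) := by
      linarith
    have hq := mul_le_mul_of_nonneg_left hAB d1
    linarith [hq, key]
  have final : N^2 * ((m1*A + cl*A') * (m2*B + ck*B')) < N^2 * (H1 * H2) := by
    calc N^2 * ((m1*A + cl*A') * (m2*B + ck*B'))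
        = (N*(m1*A + cl*A')) * (N*(m2*B + ck*B')) := by ring
      _ = (m1*N + cl*K)*(m2*N + ck*L)*(A*B) := by rw [l1, l2]; ring
      _ < (L+2)*(K+2)*((N-(L+1)*K)*(N-(K+1)*L))*(A*B) := step
      _ = ((L+2)*(N-(L+1)*K)*A) * ((K+2)*(N-(K+1)*L)*B) := by ring
      _ ≤ (N*H1) * (N*H2) := rr
      _ = N^2 * (H1*H2) := by ring
  exact lt_of_mul_lt_mul_left final (by positivity)

lemma numer_clck (s K L N : ℤ) (hs : 1 ≤ s) (hL : 1 ≤ L)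
    (hK : 0 ≤ K)
    (hN : (s+1)^2*(K+L+2*s+2)^2*(K+2)*(L+2) + K + L + 1 ≤ N) :
    (L+s+1)*(s+1)*(L+2) * ((K+s+1)*(s+1)*(K+2)) ≤ N := by
  obtain ⟨sg, rfl⟩ : ∃ sg:ℕ, s = 1+(sg:ℤ) := ⟨(s-1).toNat, by omega⟩
  obtain ⟨kp, rfl⟩ : ∃ kp:ℕ, K = (kp:ℤ) := ⟨K.toNat, by omega⟩
  obtain ⟨mu, rfl⟩ : ∃ mu:ℕ, L = 1+(mu:ℤ) := ⟨(L-1).toNat, by omega⟩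
  have hc : (0:ℤ) ≤ 458 + 345*(mu:ℤ) + 88*(mu:ℤ)^2 + 8*(mu:ℤ)^3 + 397*(kp:ℤ) + 252*(kp:ℤ)*(mu:ℤ) + 52*(kp:ℤ)*(mu:ℤ)^2 + 4*(kp:ℤ)*(mu:ℤ)^3 + 108*(kp:ℤ)^2 + 48*(kp:ℤ)^2*(mu:ℤ) + 4*(kp:ℤ)^2*(mu:ℤ)^2 + 12*(kp:ℤ)^3 + 4*(kp:ℤ)^3*(mu:ℤ) + 816*(sg:ℤ) + 536*(sg:ℤ)*(mu:ℤ) + 112*(sg:ℤ)*(mu:ℤ)^2 + 8*(sg:ℤ)*(mu:ℤ)^3 + 648*(sg:ℤ)*(kp:ℤ) + 372*(sg:ℤ)*(kp:ℤ)*(mu:ℤ) + 64*(sg:ℤ)*(kp:ℤ)*(mu:ℤ)^2 + 4*(sg:ℤ)*(kp:ℤ)*(mu:ℤ)^3 + 144*(sg:ℤ)*(kp:ℤ)^2 + 60*(sg:ℤ)*(kp:ℤ)^2*(mu:ℤ) + 4*(sg:ℤ)*(kp:ℤ)^2*(mu:ℤ)^2 + 12*(sg:ℤ)*(kp:ℤ)^3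 + 4*(sg:ℤ)*(kp:ℤ)^3*(mu:ℤ) + 546*(sg:ℤ)^2 + 302*(sg:ℤ)^2*(mu:ℤ) + 46*(sg:ℤ)^2*(mu:ℤ)^2 + 2*(sg:ℤ)^2*(mu:ℤ)^3 + 387*(sg:ℤ)^2*(kp:ℤ) + 195*(sg:ℤ)^2*(kp:ℤ)*(mu:ℤ) + 25*(sg:ℤ)^2*(kp:ℤ)*(mu:ℤ)^2 + 1*(sg:ℤ)^2*(kp:ℤ)*(mu:ℤ)^3 + 63*(sg:ℤ)^2*(kp:ℤ)^2 + 24*(sg:ℤ)^2*(kp:ℤ)^2*(mu:ℤ) + 1*(sg:ℤ)^2*(kp:ℤ)^2*(mu:ℤ)^2 + 3*(sg:ℤ)^2*(kp:ℤ)^3 + 1*(sg:ℤ)^2*(kp:ℤ)^3*(mu:ℤ) + 162*(sg:ℤ)^3 + 72*(sg:ℤ)^3*(mu:ℤ) + 6*(sg:ℤ)^3*(mu:ℤ)^2 + 99*(sg:ℤ)^3*(kp:ℤ) + 42*(sg:ℤ)^3*(kp:ℤ)*(mu:ℤ) + 3*(sg:ℤ)^3*(kp:ℤ)*(mu:ℤ)^2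 + 9*(sg:ℤ)^3*(kp:ℤ)^2 + 3*(sg:ℤ)^3*(kp:ℤ)^2*(mu:ℤ) + 18*(sg:ℤ)^4 + 6*(sg:ℤ)^4*(mu:ℤ) + 9*(sg:ℤ)^4*(kp:ℤ) + 3*(sg:ℤ)^4*(kp:ℤ)*(mu:ℤ) := by positivity
  linarith [hc, hN]

lemma numer_LK (s K L N : ℤ) (hs : 1 ≤ s) (hL : 1 ≤ L)
    (hK : 0 ≤ K)
    (hN : (s+1)^2*(K+L+2*s+2)^2*(K+2)*(L+2) + K + L + 1 ≤ N) :
    (L+1)*K ≤ N := by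
  obtain ⟨sg, rfl⟩ : ∃ sg:ℕ, s = 1+(sg:ℤ) := ⟨(s-1).toNat, by omega⟩
  obtain ⟨kp, rfl⟩ : ∃ kp:ℕ, K = (kp:ℤ) := ⟨K.toNat, by omega⟩
  obtain ⟨mu, rfl⟩ : ∃ mu:ℕ, L = 1+(mu:ℤ) := ⟨(L-1).toNat, by omega⟩
  have hc : (0:ℤ) ≤ 602 + 441*(mu:ℤ) + 104*(mu:ℤ)^2 + 8*(mu:ℤ)^3 + 539*(kp:ℤ) + 347*(kp:ℤ)*(mu:ℤ) + 68*(kp:ℤ)*(mu:ℤ)^2 + 4*(kp:ℤ)*(mu:ℤ)^3 + 144*(kp:ℤ)^2 + 72*(kp:ℤ)^2*(mu:ℤ) + 8*(kp:ℤ)^2*(mu:ℤ)^2 + 12*(kp:ℤ)^3 + 4*(kp:ℤ)^3*(mu:ℤ) + 1080*(sg:ℤ) + 696*(sg:ℤ)*(mu:ℤ) + 136*(sg:ℤ)*(mu:ℤ)^2 + 8*(sg:ℤ)*(mu:ℤ)^3 + 876*(sg:ℤ)*(kp:ℤ) + 508*(sg:ℤ)*(kp:ℤ)*(mu:ℤ)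 + 84*(sg:ℤ)*(kp:ℤ)*(mu:ℤ)^2 + 4*(sg:ℤ)*(kp:ℤ)*(mu:ℤ)^3 + 192*(sg:ℤ)*(kp:ℤ)^2 + 88*(sg:ℤ)*(kp:ℤ)^2*(mu:ℤ) + 8*(sg:ℤ)*(kp:ℤ)^2*(mu:ℤ)^2 + 12*(sg:ℤ)*(kp:ℤ)^3 + 4*(sg:ℤ)*(kp:ℤ)^3*(mu:ℤ) + 726*(sg:ℤ)^2 + 398*(sg:ℤ)^2*(mu:ℤ) + 58*(sg:ℤ)^2*(mu:ℤ)^2 + 2*(sg:ℤ)^2*(mu:ℤ)^3 + 519*(sg:ℤ)^2*(kp:ℤ) + 263*(sg:ℤ)^2*(kp:ℤ)*(mu:ℤ) + 33*(sg:ℤ)^2*(kp:ℤ)*(mu:ℤ)^2 + 1*(sg:ℤ)^2*(kp:ℤ)*(mu:ℤ)^3 + 84*(sg:ℤ)^2*(kp:ℤ)^2 + 34*(sg:ℤ)^2*(kp:ℤ)^2*(mu:ℤ) + 2*(sg:ℤ)^2*(kp:ℤ)^2*(mu:ℤ)^2 + 3*(sg:ℤ)^2*(kp:ℤ)^3 +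 1*(sg:ℤ)^2*(kp:ℤ)^3*(mu:ℤ) + 216*(sg:ℤ)^3 + 96*(sg:ℤ)^3*(mu:ℤ) + 8*(sg:ℤ)^3*(mu:ℤ)^2 + 132*(sg:ℤ)^3*(kp:ℤ) + 56*(sg:ℤ)^3*(kp:ℤ)*(mu:ℤ) + 4*(sg:ℤ)^3*(kp:ℤ)*(mu:ℤ)^2 + 12*(sg:ℤ)^3*(kp:ℤ)^2 + 4*(sg:ℤ)^3*(kp:ℤ)^2*(mu:ℤ) + 24*(sg:ℤ)^4 + 8*(sg:ℤ)^4*(mu:ℤ) + 12*(sg:ℤ)^4*(kp:ℤ) + 4*(sg:ℤ)^4*(kp:ℤ)*(mu:ℤ) := by positivity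
  linarith [hc, hN]

lemma numer_KL (s K L N : ℤ) (hs : 1 ≤ s) (hL : 1 ≤ L)
    (hK : 0 ≤ K)
    (hN : (s+1)^2*(K+L+2*s+2)^2*(K+2)*(L+2) + K + L + 1 ≤ N) :
    (K+1)*L ≤ N := by
  obtain ⟨sg, rfl⟩ : ∃ sg:ℕ, s = 1+(sg:ℤ) := ⟨(s-1).toNat, by omega⟩
  obtain ⟨kp, rfl⟩ : ∃ kp:ℕ, K = (kp:ℤ) := ⟨K.toNat, by omega⟩
  obtain ⟨mu, rfl⟩ : ∃ mu:ℕ, L = 1+(mu:ℤ) := ⟨(L-1).toNat, by omega⟩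
  have hc : (0:ℤ) ≤ 601 + 440*(mu:ℤ) + 104*(mu:ℤ)^2 + 8*(mu:ℤ)^3 + 540*(kp:ℤ) + 347*(kp:ℤ)*(mu:ℤ) + 68*(kp:ℤ)*(mu:ℤ)^2 + 4*(kp:ℤ)*(mu:ℤ)^3 + 144*(kp:ℤ)^2 + 72*(kp:ℤ)^2*(mu:ℤ) + 8*(kp:ℤ)^2*(mu:ℤ)^2 + 12*(kp:ℤ)^3 + 4*(kp:ℤ)^3*(mu:ℤ) + 1080*(sg:ℤ) + 696*(sg:ℤ)*(mu:ℤ) + 136*(sg:ℤ)*(mu:ℤ)^2 + 8*(sg:ℤ)*(mu:ℤ)^3 + 876*(sg:ℤ)*(kp:ℤ) + 508*(sg:ℤ)*(kp:ℤ)*(mu:ℤ) + 84*(sg:ℤ)*(kp:ℤ)*(mu:ℤ)^2 + 4*(sg:ℤ)*(kp:ℤ)*(mu:ℤ)^3 + 192*(sg:ℤ)*(kp:ℤ)^2 + 88*(sg:ℤ)*(kp:ℤ)^2*(mu:ℤ) + 8*(sg:ℤ)*(kp:ℤ)^2*(mu:ℤ)^2 + 12*(sg:ℤ)*(kp:ℤ)^3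 + 4*(sg:ℤ)*(kp:ℤ)^3*(mu:ℤ) + 726*(sg:ℤ)^2 + 398*(sg:ℤ)^2*(mu:ℤ) + 58*(sg:ℤ)^2*(mu:ℤ)^2 + 2*(sg:ℤ)^2*(mu:ℤ)^3 + 519*(sg:ℤ)^2*(kp:ℤ) + 263*(sg:ℤ)^2*(kp:ℤ)*(mu:ℤ) + 33*(sg:ℤ)^2*(kp:ℤ)*(mu:ℤ)^2 + 1*(sg:ℤ)^2*(kp:ℤ)*(mu:ℤ)^3 + 84*(sg:ℤ)^2*(kp:ℤ)^2 + 34*(sg:ℤ)^2*(kp:ℤ)^2*(mu:ℤ) + 2*(sg:ℤ)^2*(kp:ℤ)^2*(mu:ℤ)^2 + 3*(sg:ℤ)^2*(kp:ℤ)^3 + 1*(sg:ℤ)^2*(kp:ℤ)^3*(mu:ℤ) + 216*(sg:ℤ)^3 + 96*(sg:ℤ)^3*(mu:ℤ) + 8*(sg:ℤ)^3*(mu:ℤ)^2 + 132*(sg:ℤ)^3*(kp:ℤ) + 56*(sg:ℤ)^3*(kp:ℤ)*(mu:ℤ) + 4*(sg:ℤ)^3*(kp:ℤ)*(mu:ℤ)^2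 + 12*(sg:ℤ)^3*(kp:ℤ)^2 + 4*(sg:ℤ)^3*(kp:ℤ)^2*(mu:ℤ) + 24*(sg:ℤ)^4 + 8*(sg:ℤ)^4*(mu:ℤ) + 12*(sg:ℤ)^4*(kp:ℤ) + 4*(sg:ℤ)^4*(kp:ℤ)*(mu:ℤ) := by positivity
  linarith [hc, hN]

lemma numer_K (s K L N : ℤ) (hs : 1 ≤ s) (hL : 1 ≤ L)
    (hK : 0 ≤ K)
    (hN : (s+1)^2*(K+L+2*s+2)^2*(K+2)*(L+2) + K + L + 1 ≤ N) :
    K + 1 ≤ N := by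
  obtain ⟨sg, rfl⟩ : ∃ sg:ℕ, s = 1+(sg:ℤ) := ⟨(s-1).toNat, by omega⟩
  obtain ⟨kp, rfl⟩ : ∃ kp:ℕ, K = (kp:ℤ) := ⟨K.toNat, by omega⟩
  obtain ⟨mu, rfl⟩ : ∃ mu:ℕ, L = 1+(mu:ℤ) := ⟨(L-1).toNat, by omega⟩
  have hc : (0:ℤ) ≤ 601 + 441*(mu:ℤ) + 104*(mu:ℤ)^2 + 8*(mu:ℤ)^3 + 540*(kp:ℤ) + 348*(kp:ℤ)*(mu:ℤ) + 68*(kp:ℤ)*(mu:ℤ)^2 + 4*(kp:ℤ)*(mu:ℤ)^3 + 144*(kp:ℤ)^2 + 72*(kp:ℤ)^2*(mu:ℤ) + 8*(kp:ℤ)^2*(mu:ℤ)^2 + 12*(kp:ℤ)^3 + 4*(kp:ℤ)^3*(mu:ℤ) + 1080*(sg:ℤ) + 696*(sg:ℤ)*(mu:ℤ) + 136*(sg:ℤ)*(mu:ℤ)^2 + 8*(sg:ℤ)*(mu:ℤ)^3 + 876*(sg:ℤ)*(kp:ℤ) + 508*(sg:ℤ)*(kp:ℤ)*(mu:ℤ)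 + 84*(sg:ℤ)*(kp:ℤ)*(mu:ℤ)^2 + 4*(sg:ℤ)*(kp:ℤ)*(mu:ℤ)^3 + 192*(sg:ℤ)*(kp:ℤ)^2 + 88*(sg:ℤ)*(kp:ℤ)^2*(mu:ℤ) + 8*(sg:ℤ)*(kp:ℤ)^2*(mu:ℤ)^2 + 12*(sg:ℤ)*(kp:ℤ)^3 + 4*(sg:ℤ)*(kp:ℤ)^3*(mu:ℤ) + 726*(sg:ℤ)^2 + 398*(sg:ℤ)^2*(mu:ℤ) + 58*(sg:ℤ)^2*(mu:ℤ)^2 + 2*(sg:ℤ)^2*(mu:ℤ)^3 + 519*(sg:ℤ)^2*(kp:ℤ) + 263*(sg:ℤ)^2*(kp:ℤ)*(mu:ℤ) + 33*(sg:ℤ)^2*(kp:ℤ)*(mu:ℤ)^2 + 1*(sg:ℤ)^2*(kp:ℤ)*(mu:ℤ)^3 + 84*(sg:ℤ)^2*(kp:ℤ)^2 + 34*(sg:ℤ)^2*(kp:ℤ)^2*(mu:ℤ) + 2*(sg:ℤ)^2*(kp:ℤ)^2*(mu:ℤ)^2 + 3*(sg:ℤ)^2*(kp:ℤ)^3 +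 1*(sg:ℤ)^2*(kp:ℤ)^3*(mu:ℤ) + 216*(sg:ℤ)^3 + 96*(sg:ℤ)^3*(mu:ℤ) + 8*(sg:ℤ)^3*(mu:ℤ)^2 + 132*(sg:ℤ)^3*(kp:ℤ) + 56*(sg:ℤ)^3*(kp:ℤ)*(mu:ℤ) + 4*(sg:ℤ)^3*(kp:ℤ)*(mu:ℤ)^2 + 12*(sg:ℤ)^3*(kp:ℤ)^2 + 4*(sg:ℤ)^3*(kp:ℤ)^2*(mu:ℤ) + 24*(sg:ℤ)^4 + 8*(sg:ℤ)^4*(mu:ℤ) + 12*(sg:ℤ)^4*(kp:ℤ) + 4*(sg:ℤ)^4*(kp:ℤ)*(mu:ℤ) := by positivity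
  linarith [hc, hN]

lemma numer_L (s K L N : ℤ) (hs : 1 ≤ s) (hL : 1 ≤ L)
    (hK : 0 ≤ K)
    (hN : (s+1)^2*(K+L+2*s+2)^2*(K+2)*(L+2) + K + L + 1 ≤ N) :
    L + 2 ≤ N := by
  obtain ⟨sg, rfl⟩ : ∃ sg:ℕ, s = 1+(sg:ℤ) := ⟨(s-1).toNat, by omega⟩
  obtain ⟨kp, rfl⟩ : ∃ kp:ℕ, K = (kp:ℤ) := ⟨K.toNat, by omega⟩
  obtain ⟨mu, rfl⟩ : ∃ mu:ℕ, L = 1+(mu:ℤ) := ⟨(L-1).toNat, by omega⟩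
  have hc : (0:ℤ) ≤ 599 + 440*(mu:ℤ) + 104*(mu:ℤ)^2 + 8*(mu:ℤ)^3 + 541*(kp:ℤ) + 348*(kp:ℤ)*(mu:ℤ) + 68*(kp:ℤ)*(mu:ℤ)^2 + 4*(kp:ℤ)*(mu:ℤ)^3 + 144*(kp:ℤ)^2 + 72*(kp:ℤ)^2*(mu:ℤ) + 8*(kp:ℤ)^2*(mu:ℤ)^2 + 12*(kp:ℤ)^3 + 4*(kp:ℤ)^3*(mu:ℤ) + 1080*(sg:ℤ) + 696*(sg:ℤ)*(mu:ℤ) + 136*(sg:ℤ)*(mu:ℤ)^2 + 8*(sg:ℤ)*(mu:ℤ)^3 + 876*(sg:ℤ)*(kp:ℤ) + 508*(sg:ℤ)*(kp:ℤ)*(mu:ℤ) + 84*(sg:ℤ)*(kp:ℤ)*(mu:ℤ)^2 + 4*(sg:ℤ)*(kp:ℤ)*(mu:ℤ)^3 + 192*(sg:ℤ)*(kp:ℤ)^2 + 88*(sg:ℤ)*(kp:ℤ)^2*(mu:ℤ) + 8*(sg:ℤ)*(kp:ℤ)^2*(mu:ℤ)^2 + 12*(sg:ℤ)*(kp:ℤ)^3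 + 4*(sg:ℤ)*(kp:ℤ)^3*(mu:ℤ) + 726*(sg:ℤ)^2 + 398*(sg:ℤ)^2*(mu:ℤ) + 58*(sg:ℤ)^2*(mu:ℤ)^2 + 2*(sg:ℤ)^2*(mu:ℤ)^3 + 519*(sg:ℤ)^2*(kp:ℤ) + 263*(sg:ℤ)^2*(kp:ℤ)*(mu:ℤ) + 33*(sg:ℤ)^2*(kp:ℤ)*(mu:ℤ)^2 + 1*(sg:ℤ)^2*(kp:ℤ)*(mu:ℤ)^3 + 84*(sg:ℤ)^2*(kp:ℤ)^2 + 34*(sg:ℤ)^2*(kp:ℤ)^2*(mu:ℤ) + 2*(sg:ℤ)^2*(kp:ℤ)^2*(mu:ℤ)^2 + 3*(sg:ℤ)^2*(kp:ℤ)^3 + 1*(sg:ℤ)^2*(kp:ℤ)^3*(mu:ℤ) + 216*(sg:ℤ)^3 + 96*(sg:ℤ)^3*(mu:ℤ) + 8*(sg:ℤ)^3*(mu:ℤ)^2 + 132*(sg:ℤ)^3*(kp:ℤ) + 56*(sg:ℤ)^3*(kp:ℤ)*(mu:ℤ) + 4*(sg:ℤ)^3*(kp:ℤ)*(mu:ℤ)^2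 + 12*(sg:ℤ)^3*(kp:ℤ)^2 + 4*(sg:ℤ)^3*(kp:ℤ)^2*(mu:ℤ) + 24*(sg:ℤ)^4 + 8*(sg:ℤ)^4*(mu:ℤ) + 12*(sg:ℤ)^4*(kp:ℤ) + 4*(sg:ℤ)^4*(kp:ℤ)*(mu:ℤ) := by positivity
  linarith [hc, hN]

lemma numer_DI (s K L N : ℤ) (hs : 1 ≤ s) (hL : 1 ≤ L)
    (hK : 1 ≤ K)
    (hN : (s+1)^2*(K+L+2*s+2)^2*(K+2)*(L+2) + K + L + 1 ≤ N) :
    2*((K+s+1)*(s+1)*(K+2))*L + (L+s+1)*(s+1)*(L+2)*K + (K+2)*(2*K*L+K+L) + K*L + 1 ≤ N := by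
  obtain ⟨sg, rfl⟩ : ∃ sg:ℕ, s = 1+(sg:ℤ) := ⟨(s-1).toNat, by omega⟩
  obtain ⟨kp, rfl⟩ : ∃ kp:ℕ, K = 1+(kp:ℤ) := ⟨(K-1).toNat, by omega⟩
  obtain ⟨mu, rfl⟩ : ∃ mu:ℕ, L = 1+(mu:ℤ) := ⟨(L-1).toNat, by omega⟩
  have hc : (0:ℤ) ≤ 1231 + 807*(mu:ℤ) + 178*(mu:ℤ)^2 + 12*(mu:ℤ)^3 + 809*(kp:ℤ) + 458*(kp:ℤ)*(mu:ℤ) + 82*(kp:ℤ)*(mu:ℤ)^2 + 4*(kp:ℤ)*(mu:ℤ)^3 + 173*(kp:ℤ)^2 + 78*(kp:ℤ)^2*(mu:ℤ) + 8*(kp:ℤ)^2*(mu:ℤ)^2 + 12*(kp:ℤ)^3 + 4*(kp:ℤ)^3*(mu:ℤ) + 2115*(sg:ℤ) + 1258*(sg:ℤ)*(mu:ℤ) + 227*(sg:ℤ)*(mu:ℤ)^2 + 12*(sg:ℤ)*(mu:ℤ)^3 + 1265*(sg:ℤ)*(kp:ℤ) + 672*(sg:ℤ)*(kp:ℤ)*(mu:ℤ)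 + 99*(sg:ℤ)*(kp:ℤ)*(mu:ℤ)^2 + 4*(sg:ℤ)*(kp:ℤ)*(mu:ℤ)^3 + 226*(sg:ℤ)*(kp:ℤ)^2 + 98*(sg:ℤ)*(kp:ℤ)^2*(mu:ℤ) + 8*(sg:ℤ)*(kp:ℤ)^2*(mu:ℤ)^2 + 12*(sg:ℤ)*(kp:ℤ)^3 + 4*(sg:ℤ)*(kp:ℤ)^3*(mu:ℤ) + 1323*(sg:ℤ)^2 + 689*(sg:ℤ)^2*(mu:ℤ) + 93*(sg:ℤ)^2*(mu:ℤ)^2 + 3*(sg:ℤ)^2*(mu:ℤ)^3 + 691*(sg:ℤ)^2*(kp:ℤ) + 331*(sg:ℤ)^2*(kp:ℤ)*(mu:ℤ) + 37*(sg:ℤ)^2*(kp:ℤ)*(mu:ℤ)^2 + 1*(sg:ℤ)^2*(kp:ℤ)*(mu:ℤ)^3 + 93*(sg:ℤ)^2*(kp:ℤ)^2 + 37*(sg:ℤ)^2*(kp:ℤ)^2*(mu:ℤ) + 2*(sg:ℤ)^2*(kp:ℤ)^2*(mu:ℤ)^2 + 3*(sg:ℤ)^2*(kp:ℤ)^3 +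 1*(sg:ℤ)^2*(kp:ℤ)^3*(mu:ℤ) + 360*(sg:ℤ)^3 + 156*(sg:ℤ)^3*(mu:ℤ) + 12*(sg:ℤ)^3*(mu:ℤ)^2 + 156*(sg:ℤ)^3*(kp:ℤ) + 64*(sg:ℤ)^3*(kp:ℤ)*(mu:ℤ) + 4*(sg:ℤ)^3*(kp:ℤ)*(mu:ℤ)^2 + 12*(sg:ℤ)^3*(kp:ℤ)^2 + 4*(sg:ℤ)^3*(kp:ℤ)^2*(mu:ℤ) + 36*(sg:ℤ)^4 + 12*(sg:ℤ)^4*(mu:ℤ) + 12*(sg:ℤ)^4*(kp:ℤ) + 4*(sg:ℤ)^4*(kp:ℤ)*(mu:ℤ) := by positivity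
  linarith [hc, hN]

lemma numer_DII (s K L N : ℤ) (hs : 1 ≤ s) (hL : 1 ≤ L)
    (hK : 0 ≤ K)
    (hN : (s+1)^2*(K+L+2*s+2)^2*(K+2)*(L+2) + K + L + 1 ≤ N) :
    (L+2)*((K+s+1)*(s+1)*(K+2))*L + (L+s+1)*(s+1)*(L+2)*K + (L+2)*(2*K*L+K+L) + K*L + 1 ≤ N := by
  obtain ⟨sg, rfl⟩ : ∃ sg:ℕ, s = 1+(sg:ℤ) := ⟨(s-1).toNat, by omega⟩
  obtain ⟨kp, rfl⟩ : ∃ kp:ℕ, K = (kp:ℤ) := ⟨K.toNat, by omega⟩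
  obtain ⟨mu, rfl⟩ : ∃ mu:ℕ, L = 1+(mu:ℤ) := ⟨(L-1).toNat, by omega⟩
  have hc : (0:ℤ) ≤ 574 + 405*(mu:ℤ) + 95*(mu:ℤ)^2 + 8*(mu:ℤ)^3 + 489*(kp:ℤ) + 294*(kp:ℤ)*(mu:ℤ) + 56*(kp:ℤ)*(mu:ℤ)^2 + 4*(kp:ℤ)*(mu:ℤ)^3 + 138*(kp:ℤ)^2 + 64*(kp:ℤ)^2*(mu:ℤ) + 6*(kp:ℤ)^2*(mu:ℤ)^2 + 12*(kp:ℤ)^3 + 4*(kp:ℤ)^3*(mu:ℤ) + 1056*(sg:ℤ) + 664*(sg:ℤ)*(mu:ℤ) + 128*(sg:ℤ)*(mu:ℤ)^2 + 8*(sg:ℤ)*(mu:ℤ)^3 + 843*(sg:ℤ)*(kp:ℤ) + 476*(sg:ℤ)*(kp:ℤ)*(mu:ℤ) + 77*(sg:ℤ)*(kp:ℤ)*(mu:ℤ)^2 + 4*(sg:ℤ)*(kp:ℤ)*(mu:ℤ)^3 + 189*(sg:ℤ)*(kp:ℤ)^2 + 84*(sg:ℤ)*(kp:ℤ)^2*(mu:ℤ)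 + 7*(sg:ℤ)*(kp:ℤ)^2*(mu:ℤ)^2 + 12*(sg:ℤ)*(kp:ℤ)^3 + 4*(sg:ℤ)*(kp:ℤ)^3*(mu:ℤ) + 720*(sg:ℤ)^2 + 390*(sg:ℤ)^2*(mu:ℤ) + 56*(sg:ℤ)^2*(mu:ℤ)^2 + 2*(sg:ℤ)^2*(mu:ℤ)^3 + 513*(sg:ℤ)^2*(kp:ℤ) + 258*(sg:ℤ)^2*(kp:ℤ)*(mu:ℤ) + 32*(sg:ℤ)^2*(kp:ℤ)*(mu:ℤ)^2 + 1*(sg:ℤ)^2*(kp:ℤ)*(mu:ℤ)^3 + 84*(sg:ℤ)^2*(kp:ℤ)^2 + 34*(sg:ℤ)^2*(kp:ℤ)^2*(mu:ℤ) + 2*(sg:ℤ)^2*(kp:ℤ)^2*(mu:ℤ)^2 + 3*(sg:ℤ)^2*(kp:ℤ)^3 + 1*(sg:ℤ)^2*(kp:ℤ)^3*(mu:ℤ) + 216*(sg:ℤ)^3 + 96*(sg:ℤ)^3*(mu:ℤ) + 8*(sg:ℤ)^3*(mu:ℤ)^2 + 132*(sg:ℤ)^3*(kp:ℤ) + 56*(sg:ℤ)^3*(kp:ℤ)*(mu:ℤ)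 + 4*(sg:ℤ)^3*(kp:ℤ)*(mu:ℤ)^2 + 12*(sg:ℤ)^3*(kp:ℤ)^2 + 4*(sg:ℤ)^3*(kp:ℤ)^2*(mu:ℤ) + 24*(sg:ℤ)^4 + 8*(sg:ℤ)^4*(mu:ℤ) + 12*(sg:ℤ)^4*(kp:ℤ) + 4*(sg:ℤ)^4*(kp:ℤ)*(mu:ℤ) := by positivity
  linarith [hc, hN]

lemma numer_DIII (s K L N : ℤ) (hs : 1 ≤ s) (hL : 1 ≤ L)
    (hK : 1 ≤ K)
    (hN : (s+1)^2*(K+L+2*s+2)^2*(K+2)*(L+2) + K + L + 1 ≤ N) :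
    ((K+s+1)*(s+1)*(K+2))*L + 2*((L+s+1)*(s+1)*(L+2))*K + (K+2)*(2*K*L+K+L) + K*L + 1 ≤ N := by
  obtain ⟨sg, rfl⟩ : ∃ sg:ℕ, s = 1+(sg:ℤ) := ⟨(s-1).toNat, by omega⟩
  obtain ⟨kp, rfl⟩ : ∃ kp:ℕ, K = 1+(kp:ℤ) := ⟨(K-1).toNat, by omega⟩
  obtain ⟨mu, rfl⟩ : ∃ mu:ℕ, L = 1+(mu:ℤ) := ⟨(L-1).toNat, by omega⟩
  have hc : (0:ℤ) ≤ 1231 + 813*(mu:ℤ) + 176*(mu:ℤ)^2 + 12*(mu:ℤ)^3 + 803*(kp:ℤ) + 458*(kp:ℤ)*(mu:ℤ) + 80*(kp:ℤ)*(mu:ℤ)^2 + 4*(kp:ℤ)*(mu:ℤ)^3 + 175*(kp:ℤ)^2 + 80*(kp:ℤ)^2*(mu:ℤ) + 8*(kp:ℤ)^2*(mu:ℤ)^2 + 12*(kp:ℤ)^3 + 4*(kp:ℤ)^3*(mu:ℤ) + 2115*(sg:ℤ) + 1265*(sg:ℤ)*(mu:ℤ) + 226*(sg:ℤ)*(mu:ℤ)^2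 + 12*(sg:ℤ)*(mu:ℤ)^3 + 1258*(sg:ℤ)*(kp:ℤ) + 672*(sg:ℤ)*(kp:ℤ)*(mu:ℤ) + 98*(sg:ℤ)*(kp:ℤ)*(mu:ℤ)^2 + 4*(sg:ℤ)*(kp:ℤ)*(mu:ℤ)^3 + 227*(sg:ℤ)*(kp:ℤ)^2 + 99*(sg:ℤ)*(kp:ℤ)^2*(mu:ℤ) + 8*(sg:ℤ)*(kp:ℤ)^2*(mu:ℤ)^2 + 12*(sg:ℤ)*(kp:ℤ)^3 + 4*(sg:ℤ)*(kp:ℤ)^3*(mu:ℤ) + 1323*(sg:ℤ)^2 + 691*(sg:ℤ)^2*(mu:ℤ) + 93*(sg:ℤ)^2*(mu:ℤ)^2 + 3*(sg:ℤ)^2*(mu:ℤ)^3 + 689*(sg:ℤ)^2*(kp:ℤ) + 331*(sg:ℤ)^2*(kp:ℤ)*(mu:ℤ) + 37*(sg:ℤ)^2*(kp:ℤ)*(mu:ℤ)^2 + 1*(sg:ℤ)^2*(kp:ℤ)*(mu:ℤ)^3 + 93*(sg:ℤ)^2*(kp:ℤ)^2 + 37*(sg:ℤ)^2*(kp:ℤ)^2*(mu:ℤ)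 + 2*(sg:ℤ)^2*(kp:ℤ)^2*(mu:ℤ)^2 + 3*(sg:ℤ)^2*(kp:ℤ)^3 + 1*(sg:ℤ)^2*(kp:ℤ)^3*(mu:ℤ) + 360*(sg:ℤ)^3 + 156*(sg:ℤ)^3*(mu:ℤ) + 12*(sg:ℤ)^3*(mu:ℤ)^2 + 156*(sg:ℤ)^3*(kp:ℤ) + 64*(sg:ℤ)^3*(kp:ℤ)*(mu:ℤ) + 4*(sg:ℤ)^3*(kp:ℤ)*(mu:ℤ)^2 + 12*(sg:ℤ)^3*(kp:ℤ)^2 + 4*(sg:ℤ)^3*(kp:ℤ)^2*(mu:ℤ) + 36*(sg:ℤ)^4 + 12*(sg:ℤ)^4*(mu:ℤ) + 12*(sg:ℤ)^4*(kp:ℤ) + 4*(sg:ℤ)^4*(kp:ℤ)*(mu:ℤ) := by positivity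
  linarith [hc, hN]

lemma numer_degI (s L N : ℤ) (hs : 1 ≤ s) (hL : 1 ≤ L)
    (hN : (s+1)^2*(0+L+2*s+2)^2*(0+2)*(L+2) + 0 + L + 1 ≤ N) :
    (L+s+2)*L + 2*(L+2)*(2*(s+1)^2)*L + 1 ≤ 2*s*N := by
  obtain ⟨sg, rfl⟩ : ∃ sg:ℕ, s = 1+(sg:ℤ) := ⟨(s-1).toNat, by omega⟩
  obtain ⟨mu, rfl⟩ : ∃ mu:ℕ, L = 1+(mu:ℤ) := ⟨(L-1).toNat, by omega⟩
  have hc : (0:ℤ) ≤ 1151 + 813*(mu:ℤ) + 191*(mu:ℤ)^2 + 16*(mu:ℤ)^3 + 3315*(sg:ℤ) + 2209*(sg:ℤ)*(mu:ℤ) + 464*(sg:ℤ)*(mu:ℤ)^2 + 32*(sg:ℤ)*(mu:ℤ)^3 + 3600*(sg:ℤ)^2 + 2172*(sg:ℤ)^2*(mu:ℤ) + 384*(sg:ℤ)^2*(mu:ℤ)^2 + 20*(sg:ℤ)^2*(mu:ℤ)^3 + 1884*(sg:ℤ)^3 + 988*(sg:ℤ)^3*(mu:ℤ) + 132*(sg:ℤ)^3*(mu:ℤ)^2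 + 4*(sg:ℤ)^3*(mu:ℤ)^3 + 480*(sg:ℤ)^4 + 208*(sg:ℤ)^4*(mu:ℤ) + 16*(sg:ℤ)^4*(mu:ℤ)^2 + 48*(sg:ℤ)^5 + 16*(sg:ℤ)^5*(mu:ℤ) := by positivity
  have hN2 := mul_le_mul_of_nonneg_left hN (by positivity : (0:ℤ) ≤ 2*(1+(sg:ℤ)))
  linarith [hc, hN2]

lemma numer_degIII (L N : ℤ) (hL : 1 ≤ L)
    (hN : (1+1)^2*(0+L+2*1+2)^2*(0+2)*(L+2) + 0 + L + 1 ≤ N) :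
    (9*(L+2)+1)*L + 1 ≤ 2*N := by
  obtain ⟨mu, rfl⟩ : ∃ mu:ℕ, L = 1+(mu:ℤ) := ⟨(L-1).toNat, by omega⟩
  have hc : (0:ℤ) ≤ 1175 + 845*(mu:ℤ) + 199*(mu:ℤ)^2 + 16*(mu:ℤ)^3 := by positivity
  linarith [hc, hN]

lemma degI (N L s ck' B B' G1 G2 H1 H2 : ℤ) (hL : 1 ≤ L) (hs : 1 ≤ s)
    (hB : 1 ≤ B) (hB'0 : 0 ≤ B') (eB : L*B = N*B') (hN0 : 0 < N) (hLN : L ≤ N)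
    (hck' : 0 ≤ ck')
    (hbound : (L+s+2)*L + 2*(L+2)*ck'*L + 1 ≤ 2*s*N)
    (hG1 : G1 = 2*(L+2)) (hG2 : G2 = B + ck'*B')
    (hH1 : H1 = L+s+2) (hH2 : 2*B - B' + s ≤ H2) : G1*G2 < H1*H2 := by
  subst hG1 hG2 hH1
  have hB0 : (0:ℤ) ≤ B := by linarith
  have hB'B : B' ≤ B := by
    have h1 : N*B' ≤ N*B := by
      rw [← eB]; exact mul_le_mul_of_nonneg_right hLN hB0
    exact le_of_mul_le_mul_left h1 hN0
  have iden : N*((L+s+2)*(2*B-B'+s)) - N*(2*(L+2)*(B+ck'*B'))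
      = (2*s*N - ((L+s+2)*L + 2*(L+2)*ck'*L))*B + s*(L+s+2)*N := by
    linear_combination ((L+s+2) + 2*(L+2)*ck') * eB
  have t1 : (0:ℤ) ≤ (2*s*N - ((L+s+2)*L + 2*(L+2)*ck'*L))*B :=
    mul_nonneg (by linarith) hB0
  have t2 : (0:ℤ) < s*(L+s+2)*N :=
    mul_pos (mul_pos (by linarith) (by linarith)) hN0
  have step : N*(2*(L+2)*(B+ck'*B')) < N*((L+s+2)*(2*B-B'+s)) := by linarith
  have step2 : 2*(L+2)*(B+ck'*B') < (L+s+2)*(2*B-B'+s) :=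
    lt_of_mul_lt_mul_left step hN0.le
  have step3 : (L+s+2)*(2*B-B'+s) ≤ (L+s+2)*H2 :=
    mul_le_mul_of_nonneg_left hH2 (by linarith)
  linarith

lemma degIII (N L B B' G1 G2 H1 H2 : ℤ) (hL : 1 ≤ L)
    (hB : 1 ≤ B) (hB'0 : 0 ≤ B') (eB : L*B = N*B') (hN0 : 0 < N) (hLN : L ≤ N)
    (hbound : (9*(L+2)+1)*L + 1 ≤ 2*N)
    (hG1 : G1 = L+2) (hG2 : G2 = 2*B + 8*B')
    (hH1 : H1 = L+3) (hH2 : 2*B - B' + 1 ≤ H2) : G1*G2 < H1*H2 := by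
  subst hG1 hG2 hH1
  have hB0 : (0:ℤ) ≤ B := by linarith
  have hB'B : B' ≤ B := by
    have h1 : N*B' ≤ N*B := by
      rw [← eB]; exact mul_le_mul_of_nonneg_right hLN hB0
    exact le_of_mul_le_mul_left h1 hN0
  have iden : N*((L+3)*(2*B-B'+1)) - N*((L+2)*(2*B+8*B'))
      = (2*N - (9*(L+2)+1)*L)*B + (L+3)*N := by
    linear_combination ((L+3) + 8*(L+2)) * eB
  have t1 : (0:ℤ) ≤ (2*N - (9*(L+2)+1)*L)*B := mul_nonneg (by linarith) hB0
  have t2 : (0:ℤ) < (L+3)*N := mul_pos (by linarith) hN0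
  have step : N*((L+2)*(2*B+8*B')) < N*((L+3)*(2*B-B'+1)) := by linarith
  have step2 : (L+2)*(2*B+8*B') < (L+3)*(2*B-B'+1) := lt_of_mul_lt_mul_left step hN0.le
  have step3 : (L+3)*(2*B-B'+1) ≤ (L+3)*H2 := mul_le_mul_of_nonneg_left hH2 (by linarith)
  linarith

lemma keyI (s K L N : ℤ) (hs : 1 ≤ s) (hK : 1 ≤ K) (hL : 1 ≤ L) (hN0 : 0 < N)
    (hclck : (L+s+1)*(s+1)*(L+2) * ((K+s+1)*(s+1)*(K+2)) ≤ N)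
    (hD : 2*((K+s+1)*(s+1)*(K+2))*L + (L+s+1)*(s+1)*(L+2)*K + (K+2)*(2*K*L+K+L) + K*L + 1 ≤ N) :
    (2*(L+2)*N + (L+s+1)*(s+1)*(L+2)*K) * (1*N + (K+s+1)*(s+1)*(K+2)*L)
      < (L+2)*(K+2)*((N-(L+1)*K)*(N-(K+1)*L)) := by
  set cl := (L+s+1)*(s+1)*(L+2) with hcl
  set ck := (K+s+1)*(s+1)*(K+2) with hck
  have hclpos : 0 ≤ cl := by rw [hcl]; apply mul_nonneg (mul_nonneg (by linarith) (by linarith)) (by linarith)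
  have hckpos : 0 ≤ ck := by rw [hck]; apply mul_nonneg (mul_nonneg (by linarith) (by linarith)) (by linarith)
  have hPN : (0:ℤ) < (L+2)*N := mul_pos (by linarith) hN0
  have f1 : (0:ℤ) ≤ (K-1)*(L+2)*N^2 :=
    mul_nonneg (mul_nonneg (by linarith) (by linarith)) (sq_nonneg N)
  have f2 : (L+2)*N*1 ≤ (L+2)*N*(N - (2*ck*L + cl*K + (K+2)*(2*K*L+K+L) + K*L)) :=
    mul_le_mul_of_nonneg_left (by linarith) hPN.le
  have f3 : (0:ℤ) ≤ (L+1)*cl*K*N :=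
    mul_nonneg (mul_nonneg (mul_nonneg (by linarith) hclpos) (by linarith)) hN0.le
  have hdd : cl*ck ≤ (L+2)*N := by nlinarith [mul_nonneg (by linarith : (0:ℤ) ≤ L+1) hN0.le]
  have f4 : (0:ℤ) ≤ K*L*((L+2)*N - cl*ck) :=
    mul_nonneg (mul_nonneg (by linarith) (by linarith)) (by linarith)
  have f5 : (0:ℤ) ≤ (L+2)*(K+2)*(L+1)*(K+1)*K*L := by
    apply mul_nonneg; apply mul_nonneg; apply mul_nonneg; apply mul_nonneg
    all_goals first | apply mul_nonneg | skip
    all_goals linarith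
  linarith [f1, f2, f3, f4, f5]

lemma keyII (s K L N : ℤ) (hs : 1 ≤ s) (hK : 0 ≤ K) (hL : 1 ≤ L) (hN0 : 0 < N)
    (hclck : (L+s+1)*(s+1)*(L+2) * ((K+s+1)*(s+1)*(K+2)) ≤ N)
    (hD : (L+2)*((K+s+1)*(s+1)*(K+2))*L + (L+s+1)*(s+1)*(L+2)*K + (L+2)*(2*K*L+K+L) + K*L + 1 ≤ N) :
    ((L+1)*N + (L+s+1)*(s+1)*(L+2)*K) * ((K+2)*N + (K+s+1)*(s+1)*(K+2)*L)
      < (L+2)*(K+2)*((N-(L+1)*K)*(N-(K+1)*L)) := by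
  set cl := (L+s+1)*(s+1)*(L+2) with hcl
  set ck := (K+s+1)*(s+1)*(K+2) with hck
  have hclpos : 0 ≤ cl := by rw [hcl]; apply mul_nonneg (mul_nonneg (by linarith) (by linarith)) (by linarith)
  have hckpos : 0 ≤ ck := by rw [hck]; apply mul_nonneg (mul_nonneg (by linarith) (by linarith)) (by linarith)
  have hQN : (0:ℤ) < (K+2)*N := mul_pos (by linarith) hN0
  have f2 : (K+2)*N*1 ≤ (K+2)*N*(N - ((L+2)*ck*L + cl*K + (L+2)*(2*K*L+K+L) + K*L)) :=
    mul_le_mul_of_nonneg_left (by linarith) hQN.le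
  have f3 : (0:ℤ) ≤ ck*L*((K+2)*(L+2)-L-1)*N := by
    apply mul_nonneg (mul_nonneg (mul_nonneg hckpos (by linarith)) (by nlinarith)) hN0.le
  have hdd : cl*ck ≤ (K+2)*N := by nlinarith [mul_nonneg (by linarith : (0:ℤ) ≤ K+1) hN0.le]
  have f4 : (0:ℤ) ≤ K*L*((K+2)*N - cl*ck) :=
    mul_nonneg (mul_nonneg (by linarith) (by linarith)) (by linarith)
  have f5 : (0:ℤ) ≤ (L+2)*(K+2)*(L+1)*(K+1)*K*L := by
    apply mul_nonneg; apply mul_nonneg; apply mul_nonneg; apply mul_nonneg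
    all_goals first | apply mul_nonneg | skip
    all_goals linarith
  linarith [f2, f3, f4, f5]

lemma keyIII (s K L N : ℤ) (hs : 1 ≤ s) (hK : 1 ≤ K) (hL : 1 ≤ L) (hN0 : 0 < N)
    (hclck : (L+s+1)*(s+1)*(L+2) * ((K+s+1)*(s+1)*(K+2)) ≤ N)
    (hD : ((K+s+1)*(s+1)*(K+2))*L + 2*((L+s+1)*(s+1)*(L+2))*K + (K+2)*(2*K*L+K+L) + K*L + 1 ≤ N) :
    ((L+2)*N + (L+s+1)*(s+1)*(L+2)*K) * (2*N + (K+s+1)*(s+1)*(K+2)*L)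
      < (L+2)*(K+2)*((N-(L+1)*K)*(N-(K+1)*L)) := by
  set cl := (L+s+1)*(s+1)*(L+2) with hcl
  set ck := (K+s+1)*(s+1)*(K+2) with hck
  have hclpos : 0 ≤ cl := by rw [hcl]; apply mul_nonneg (mul_nonneg (by linarith) (by linarith)) (by linarith)
  have hckpos : 0 ≤ ck := by rw [hck]; apply mul_nonneg (mul_nonneg (by linarith) (by linarith)) (by linarith)
  have hPN : (0:ℤ) < (L+2)*N := mul_pos (by linarith) hN0
  have f1 : (0:ℤ) ≤ (L+2)*(K-1)*N^2 :=
    mul_nonneg (mul_nonneg (by linarith) (by linarith)) (sq_nonneg N)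
  have f2 : (L+2)*N*1 ≤ (L+2)*N*(N - (ck*L + 2*cl*K + (K+2)*(2*K*L+K+L) + K*L)) :=
    mul_le_mul_of_nonneg_left (by linarith) hPN.le
  have f3 : (0:ℤ) ≤ 2*(L+1)*cl*K*N :=
    mul_nonneg (mul_nonneg (mul_nonneg (by linarith) hclpos) (by linarith)) hN0.le
  have hdd : cl*ck ≤ (L+2)*N := by nlinarith [mul_nonneg (by linarith : (0:ℤ) ≤ L+1) hN0.le]
  have f4 : (0:ℤ) ≤ K*L*((L+2)*N - cl*ck) :=
    mul_nonneg (mul_nonneg (by linarith) (by linarith)) (by linarith)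
  have f5 : (0:ℤ) ≤ (L+2)*(K+2)*(L+1)*(K+1)*K*L := by
    apply mul_nonneg; apply mul_nonneg; apply mul_nonneg; apply mul_nonneg
    all_goals first | apply mul_nonneg | skip
    all_goals linarith
  linarith [f1, f2, f3, f4, f5]

set_option maxHeartbeats 2000000 in
/-- Lemma 4.2. -/
theorem g_lt_hh
    (n k l t : ℕ) (hn0 : 0 < n) (ht0 : 0 < t) (hk : t + 1 ≤ k) (hl : t + 2 ≤ l)
    (hn : (t+1)^2 * (k+l)^2 * (k - t + 1) * (l - t + 1) + k + l - t ≤ n) :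
    gfun n (2 * ((l : ℤ) - t + 1)) k l t * gfun n 1 l k t < hfun n k l t * hfun n l k t ∧
    gfun n ((l : ℤ) - t) k l t * gfun n ((k : ℤ) - t + 1) l k t < hfun n k l t * hfun n l k t ∧
    (t = 1 → gfun n l k l 1 * gfun n 2 l k 1 < hfun n k l 1 * hfun n l k 1) := by
  have hkt : t ≤ k := by omega
  have hlt : t ≤ l := by omega
  have hnZ : ((t:ℤ)+1)^2*((k:ℤ)+(l:ℤ))^2*((k:ℤ)-(t:ℤ)+1)*((l:ℤ)-(t:ℤ)+1)
      + (k:ℤ) + (l:ℤ) - (t:ℤ) ≤ (n:ℤ) := by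
    have h1 : t ≤ (t+1)^2*(k+l)^2*(k-t+1)*(l-t+1) + k + l := by
      have h2 : t ≤ k + l := by omega
      have h3 := Nat.zero_le ((t+1)^2*(k+l)^2*(k-t+1)*(l-t+1))
      linarith
    zify [h1, hkt, hlt] at hn
    linarith [hn]
  have hs1 : (1:ℤ) ≤ (t:ℤ) := by exact_mod_cast ht0
  have hK0 : (0:ℤ) ≤ (k:ℤ)-(t:ℤ)-1 := by omega
  have hL1 : (1:ℤ) ≤ (l:ℤ)-(t:ℤ)-1 := by omega
  have hNbase : ((t:ℤ)+1)^2*(((k:ℤ)-(t:ℤ)-1)+((l:ℤ)-(t:ℤ)-1)+2*(t:ℤ)+2)^2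
      *(((k:ℤ)-(t:ℤ)-1)+2)*(((l:ℤ)-(t:ℤ)-1)+2)
      + ((k:ℤ)-(t:ℤ)-1) + ((l:ℤ)-(t:ℤ)-1) + 1 ≤ (n:ℤ)-(t:ℤ)-1 := by linarith [hnZ]
  have hclck := numer_clck ((t:ℤ)) ((k:ℤ)-(t:ℤ)-1) ((l:ℤ)-(t:ℤ)-1) ((n:ℤ)-(t:ℤ)-1)
    hs1 hL1 hK0 hNbase
  have hLK := numer_LK ((t:ℤ)) ((k:ℤ)-(t:ℤ)-1) ((l:ℤ)-(t:ℤ)-1) ((n:ℤ)-(t:ℤ)-1)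
    hs1 hL1 hK0 hNbase
  have hKL := numer_KL ((t:ℤ)) ((k:ℤ)-(t:ℤ)-1) ((l:ℤ)-(t:ℤ)-1) ((n:ℤ)-(t:ℤ)-1)
    hs1 hL1 hK0 hNbase
  have hKN := numer_K ((t:ℤ)) ((k:ℤ)-(t:ℤ)-1) ((l:ℤ)-(t:ℤ)-1) ((n:ℤ)-(t:ℤ)-1)
    hs1 hL1 hK0 hNbase
  have hLN := numer_L ((t:ℤ)) ((k:ℤ)-(t:ℤ)-1) ((l:ℤ)-(t:ℤ)-1) ((n:ℤ)-(t:ℤ)-1)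
    hs1 hL1 hK0 hNbase
  have hN0 : (0:ℤ) < (n:ℤ)-(t:ℤ)-1 := by linarith
  have hA1 : (1:ℤ) ≤ ch ((n:ℤ)-(t:ℤ)-1) ((k:ℤ)-(t:ℤ)-1) := ch_one_le hK0 (by linarith)
  have hB1 : (1:ℤ) ≤ ch ((n:ℤ)-(t:ℤ)-1) ((l:ℤ)-(t:ℤ)-1) := ch_one_le (by linarith) (by linarith)
  have hA'0 := ch_nonneg ((n:ℤ)-(t:ℤ)-2) ((k:ℤ)-(t:ℤ)-2)
  have hB'0 := ch_nonneg ((n:ℤ)-(t:ℤ)-2) ((l:ℤ)-(t:ℤ)-2)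
  have eA : ((k:ℤ)-(t:ℤ)-1) * ch ((n:ℤ)-(t:ℤ)-1) ((k:ℤ)-(t:ℤ)-1)
      = ((n:ℤ)-(t:ℤ)-1) * ch ((n:ℤ)-(t:ℤ)-2) ((k:ℤ)-(t:ℤ)-2) := by
    have h := ch_id (a := (n:ℤ)-(t:ℤ)-1) (b := (k:ℤ)-(t:ℤ)-1) hK0 (by linarith)
    rw [show ((n:ℤ)-(t:ℤ)-1)-1 = (n:ℤ)-(t:ℤ)-2 by ring,
      show ((k:ℤ)-(t:ℤ)-1)-1 = (k:ℤ)-(t:ℤ)-2 by ring] at h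
    exact h
  have eB : ((l:ℤ)-(t:ℤ)-1) * ch ((n:ℤ)-(t:ℤ)-1) ((l:ℤ)-(t:ℤ)-1)
      = ((n:ℤ)-(t:ℤ)-1) * ch ((n:ℤ)-(t:ℤ)-2) ((l:ℤ)-(t:ℤ)-2) := by
    have h := ch_id (a := (n:ℤ)-(t:ℤ)-1) (b := (l:ℤ)-(t:ℤ)-1) (by linarith) (by linarith)
    rw [show ((n:ℤ)-(t:ℤ)-1)-1 = (n:ℤ)-(t:ℤ)-2 by ring,
      show ((l:ℤ)-(t:ℤ)-1)-1 = (l:ℤ)-(t:ℤ)-2 by ring] at h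
    exact h
  -- lower bound for hfun n k l t
  have hH1 : (((l:ℤ)-(t:ℤ)-1)+2)*(ch ((n:ℤ)-(t:ℤ)-1) ((k:ℤ)-(t:ℤ)-1)
      - (((l:ℤ)-(t:ℤ)-1)+1)*ch ((n:ℤ)-(t:ℤ)-2) ((k:ℤ)-(t:ℤ)-2)) + (t:ℤ)
      ≤ hfun (n:ℤ) (k:ℤ) (l:ℤ) (t:ℤ) := by
    have t1 := ch_tele_lower (a := (n:ℤ)-(l:ℤ)-1+((l:ℤ)-(t:ℤ)+1)) (a' := (n:ℤ)-(l:ℤ)-1)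
      (r := (k:ℤ)-(t:ℤ)) (by linarith) (by linarith [hL1]) (by linarith)
    rw [show (n:ℤ)-(l:ℤ)-1+((l:ℤ)-(t:ℤ)+1) = (n:ℤ)-(t:ℤ) by ring] at t1
    rw [show ((n:ℤ)-(t:ℤ)) - ((n:ℤ)-(l:ℤ)-1) = (l:ℤ)-(t:ℤ)+1 by ring,
      show ((k:ℤ)-(t:ℤ))-1 = (k:ℤ)-(t:ℤ)-1 by ring] at t1
    have t2 := ch_tele_upper (a := (n:ℤ)-(t:ℤ)-1) (a' := (n:ℤ)-(l:ℤ)-1)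
      (r := (k:ℤ)-(t:ℤ)-1) (by linarith) (by omega) hK0
    rw [show ((n:ℤ)-(t:ℤ)-1) - ((n:ℤ)-(l:ℤ)-1) = (l:ℤ)-(t:ℤ) by ring,
      show ((n:ℤ)-(t:ℤ)-1)-1 = (n:ℤ)-(t:ℤ)-2 by ring,
      show ((k:ℤ)-(t:ℤ)-1)-1 = (k:ℤ)-(t:ℤ)-2 by ring] at t2
    have hm := mul_le_mul_of_nonneg_left (by linarith [t2] :
      ch ((n:ℤ)-(t:ℤ)-1) ((k:ℤ)-(t:ℤ)-1) - ((l:ℤ)-(t:ℤ))*ch ((n:ℤ)-(t:ℤ)-2) ((k:ℤ)-(t:ℤ)-2)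
        ≤ ch ((n:ℤ)-(l:ℤ)-1) ((k:ℤ)-(t:ℤ)-1))
      (by linarith : (0:ℤ) ≤ (l:ℤ)-(t:ℤ)+1)
    unfold hfun
    linarith [hm, t1]
  -- lower bound for hfun n l k t
  have hH2 : (((k:ℤ)-(t:ℤ)-1)+2)*(ch ((n:ℤ)-(t:ℤ)-1) ((l:ℤ)-(t:ℤ)-1)
      - (((k:ℤ)-(t:ℤ)-1)+1)*ch ((n:ℤ)-(t:ℤ)-2) ((l:ℤ)-(t:ℤ)-2)) + (t:ℤ)
      ≤ hfun (n:ℤ) (l:ℤ) (k:ℤ) (t:ℤ) := by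
    have t1 := ch_tele_lower (a := (n:ℤ)-(k:ℤ)-1+((k:ℤ)-(t:ℤ)+1)) (a' := (n:ℤ)-(k:ℤ)-1)
      (r := (l:ℤ)-(t:ℤ)) (by linarith) (by linarith) (by linarith)
    rw [show (n:ℤ)-(k:ℤ)-1+((k:ℤ)-(t:ℤ)+1) = (n:ℤ)-(t:ℤ) by ring] at t1
    rw [show ((n:ℤ)-(t:ℤ)) - ((n:ℤ)-(k:ℤ)-1) = (k:ℤ)-(t:ℤ)+1 by ring,
      show ((l:ℤ)-(t:ℤ))-1 = (l:ℤ)-(t:ℤ)-1 by ring] at t1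
    have t2 := ch_tele_upper (a := (n:ℤ)-(t:ℤ)-1) (a' := (n:ℤ)-(k:ℤ)-1)
      (r := (l:ℤ)-(t:ℤ)-1) (by linarith) (by omega) (by linarith)
    rw [show ((n:ℤ)-(t:ℤ)-1) - ((n:ℤ)-(k:ℤ)-1) = (k:ℤ)-(t:ℤ) by ring,
      show ((n:ℤ)-(t:ℤ)-1)-1 = (n:ℤ)-(t:ℤ)-2 by ring,
      show ((l:ℤ)-(t:ℤ)-1)-1 = (l:ℤ)-(t:ℤ)-2 by ring] at t2
    have hm := mul_le_mul_of_nonneg_left (by linarith [t2] :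
      ch ((n:ℤ)-(t:ℤ)-1) ((l:ℤ)-(t:ℤ)-1) - ((k:ℤ)-(t:ℤ))*ch ((n:ℤ)-(t:ℤ)-2) ((l:ℤ)-(t:ℤ)-2)
        ≤ ch ((n:ℤ)-(k:ℤ)-1) ((l:ℤ)-(t:ℤ)-1))
      (by linarith : (0:ℤ) ≤ (k:ℤ)-(t:ℤ)+1)
    unfold hfun
    linarith [hm, t1]
  refine ⟨?_, ?_, ?_⟩
  · -- part (i)
    rcases (by omega : k = t+1 ∨ t+2 ≤ k) with hdeg | hnd
    · -- degenerate k = t+1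
      rw [show ((k:ℕ):ℤ) = (t:ℤ)+1 by omega]
      have hNdeg : ((t:ℤ)+1)^2*(0+((l:ℤ)-(t:ℤ)-1)+2*(t:ℤ)+2)^2*(0+2)*(((l:ℤ)-(t:ℤ)-1)+2)
          + 0 + ((l:ℤ)-(t:ℤ)-1) + 1 ≤ (n:ℤ)-(t:ℤ)-1 := by
        have hkk : ((k:ℕ):ℤ) = (t:ℤ)+1 := by omega
        have hnZ2 := hnZ
        rw [hkk] at hnZ2
        linarith [hnZ2]
      have hbound := numer_degI ((t:ℤ)) ((l:ℤ)-(t:ℤ)-1) ((n:ℤ)-(t:ℤ)-1) hs1 hL1 hNdeg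
      refine degI ((n:ℤ)-(t:ℤ)-1) ((l:ℤ)-(t:ℤ)-1) ((t:ℤ)) (2*((t:ℤ)+1)^2)
        (ch ((n:ℤ)-(t:ℤ)-1) ((l:ℤ)-(t:ℤ)-1)) (ch ((n:ℤ)-(t:ℤ)-2) ((l:ℤ)-(t:ℤ)-2))
        _ _ _ _ hL1 hs1 hB1 hB'0 eB hN0 (by linarith) (by positivity) hbound ?_ ?_ ?_ ?_
      · unfold gfun
        rw [show ((t:ℤ)+1)-(t:ℤ)-1 = (0:ℤ) by ring, show ((t:ℤ)+1)-(t:ℤ)-2 = (-1:ℤ) by ring]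
        rw [ch_zero_right (by linarith), ch_of_neg (by omega)]
        ring
      · unfold gfun
        ring
      · unfold hfun
        rw [show ((t:ℤ)+1)-(t:ℤ) = (1:ℤ) by ring]
        rw [ch_one_right (by linarith), ch_one_right (by linarith)]
        ring
      · -- 2B - B' + t ≤ hfun n l (t+1) t
        unfold hfun
        rw [show (n:ℤ)-((t:ℤ)+1)-1 = (n:ℤ)-(t:ℤ)-2 by ring]
        have p1 := ch_pascal (a := (n:ℤ)-(t:ℤ)-1) (r := (l:ℤ)-(t:ℤ)) (by linarith) (by linarith)
        rw [show (n:ℤ)-(t:ℤ)-1+1 = (n:ℤ)-(t:ℤ) by ring,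
          show ((l:ℤ)-(t:ℤ))-1 = (l:ℤ)-(t:ℤ)-1 by ring] at p1
        have p2 := ch_pascal (a := (n:ℤ)-(t:ℤ)-2) (r := (l:ℤ)-(t:ℤ)) (by linarith) (by linarith)
        rw [show (n:ℤ)-(t:ℤ)-2+1 = (n:ℤ)-(t:ℤ)-1 by ring,
          show ((l:ℤ)-(t:ℤ))-1 = (l:ℤ)-(t:ℤ)-1 by ring] at p2
        have p3 := ch_pascal (a := (n:ℤ)-(t:ℤ)-2) (r := (l:ℤ)-(t:ℤ)-1) (by linarith) (by linarith)
        rw [show (n:ℤ)-(t:ℤ)-2+1 = (n:ℤ)-(t:ℤ)-1 by ring,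
          show ((l:ℤ)-(t:ℤ)-1)-1 = (l:ℤ)-(t:ℤ)-2 by ring] at p3
        linarith [p1, p2, p3]
    · -- nondegenerate
      have hKk1 : (1:ℤ) ≤ (k:ℤ)-(t:ℤ)-1 := by omega
      have hDI := numer_DI ((t:ℤ)) ((k:ℤ)-(t:ℤ)-1) ((l:ℤ)-(t:ℤ)-1) ((n:ℤ)-(t:ℤ)-1)
        hs1 hL1 hKk1 hNbase
      have key := keyI ((t:ℤ)) ((k:ℤ)-(t:ℤ)-1) ((l:ℤ)-(t:ℤ)-1) ((n:ℤ)-(t:ℤ)-1)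
        hs1 hKk1 hL1 hN0 hclck hDI
      have key' : (2*((l:ℤ)-(t:ℤ)+1)*((n:ℤ)-(t:ℤ)-1)
            + (l:ℤ)*((t:ℤ)+1)*((l:ℤ)-(t:ℤ)+1)*((k:ℤ)-(t:ℤ)-1))
          * (1*((n:ℤ)-(t:ℤ)-1) + (k:ℤ)*((t:ℤ)+1)*((k:ℤ)-(t:ℤ)+1)*((l:ℤ)-(t:ℤ)-1))
          < (((l:ℤ)-(t:ℤ)-1)+2)*(((k:ℤ)-(t:ℤ)-1)+2)
            *((((n:ℤ)-(t:ℤ)-1)-(((l:ℤ)-(t:ℤ)-1)+1)*((k:ℤ)-(t:ℤ)-1))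
              *(((n:ℤ)-(t:ℤ)-1)-(((k:ℤ)-(t:ℤ)-1)+1)*((l:ℤ)-(t:ℤ)-1))) := by
        linarith [key]
      exact combine ((n:ℤ)-(t:ℤ)-1) ((k:ℤ)-(t:ℤ)-1) ((l:ℤ)-(t:ℤ)-1) _ _ _ _ ((t:ℤ))
        (2*((l:ℤ)-(t:ℤ)+1)) 1 ((l:ℤ)*((t:ℤ)+1)*((l:ℤ)-(t:ℤ)+1)) ((k:ℤ)*((t:ℤ)+1)*((k:ℤ)-(t:ℤ)+1))
        _ _ hA1 hB1 hA'0 hB'0 eA eB (by linarith) (by linarith) (by norm_num)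
        (mul_nonneg (mul_nonneg (by positivity) (by positivity)) (by linarith))
        (mul_nonneg (mul_nonneg (by positivity) (by positivity)) (by linarith)) hK0 (by linarith) hN0
        (by linarith [hLK]) (by linarith [hKL]) key' hH1 hH2
  · -- part (ii)
    have hDII := numer_DII ((t:ℤ)) ((k:ℤ)-(t:ℤ)-1) ((l:ℤ)-(t:ℤ)-1) ((n:ℤ)-(t:ℤ)-1)
      hs1 hL1 hK0 hNbase
    have key := keyII ((t:ℤ)) ((k:ℤ)-(t:ℤ)-1) ((l:ℤ)-(t:ℤ)-1) ((n:ℤ)-(t:ℤ)-1)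
      hs1 hK0 hL1 hN0 hclck hDII
    have key' : (((l:ℤ)-(t:ℤ))*((n:ℤ)-(t:ℤ)-1)
          + (l:ℤ)*((t:ℤ)+1)*((l:ℤ)-(t:ℤ)+1)*((k:ℤ)-(t:ℤ)-1))
        * (((k:ℤ)-(t:ℤ)+1)*((n:ℤ)-(t:ℤ)-1) + (k:ℤ)*((t:ℤ)+1)*((k:ℤ)-(t:ℤ)+1)*((l:ℤ)-(t:ℤ)-1))
        < (((l:ℤ)-(t:ℤ)-1)+2)*(((k:ℤ)-(t:ℤ)-1)+2)
          *((((n:ℤ)-(t:ℤ)-1)-(((l:ℤ)-(t:ℤ)-1)+1)*((k:ℤ)-(t:ℤ)-1))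
            *(((n:ℤ)-(t:ℤ)-1)-(((k:ℤ)-(t:ℤ)-1)+1)*((l:ℤ)-(t:ℤ)-1))) := by
      linarith [key]
    exact combine ((n:ℤ)-(t:ℤ)-1) ((k:ℤ)-(t:ℤ)-1) ((l:ℤ)-(t:ℤ)-1) _ _ _ _ ((t:ℤ))
      ((l:ℤ)-(t:ℤ)) ((k:ℤ)-(t:ℤ)+1) ((l:ℤ)*((t:ℤ)+1)*((l:ℤ)-(t:ℤ)+1))
      ((k:ℤ)*((t:ℤ)+1)*((k:ℤ)-(t:ℤ)+1))
      _ _ hA1 hB1 hA'0 hB'0 eA eB (by linarith) (by linarith) (by linarith)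
      (mul_nonneg (mul_nonneg (by positivity) (by positivity)) (by linarith))
      (mul_nonneg (mul_nonneg (by positivity) (by positivity)) (by linarith)) hK0 (by linarith) hN0
      (by linarith [hLK]) (by linarith [hKL]) key' hH1 hH2
  · -- part (iii)
    intro ht1
    subst ht1
    simp only [Nat.cast_one] at hs1 hK0 hL1 hNbase hclck hLK hKL hKN hLN hN0 hA1 hB1 hA'0 hB'0 eA eB hH1 hH2 hnZ
    rcases (by omega : k = 2 ∨ 3 ≤ k) with hdeg | hnd
    · -- degenerate k = 2
      rw [show ((k:ℕ):ℤ) = (2:ℤ) by omega]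
      have hNdeg : ((1:ℤ)+1)^2*(0+((l:ℤ)-1-1)+2*1+2)^2*(0+2)*(((l:ℤ)-1-1)+2)
          + 0 + ((l:ℤ)-1-1) + 1 ≤ (n:ℤ)-1-1 := by
        have hkk : ((k:ℕ):ℤ) = 2 := by omega
        have hnZ2 := hnZ
        rw [hkk] at hnZ2
        linarith [hnZ2]
      have hbound := numer_degIII ((l:ℤ)-1-1) ((n:ℤ)-1-1) hL1 hNdeg
      refine degIII ((n:ℤ)-1-1) ((l:ℤ)-1-1)
        (ch ((n:ℤ)-1-1) ((l:ℤ)-1-1)) (ch ((n:ℤ)-1-2) ((l:ℤ)-1-2))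
        _ _ _ _ hL1 hB1 hB'0 eB hN0 (by linarith) hbound ?_ ?_ ?_ ?_
      · unfold gfun
        rw [show (2:ℤ)-1-1 = (0:ℤ) by ring, show (2:ℤ)-1-2 = (-1:ℤ) by ring]
        rw [ch_zero_right (by linarith), ch_of_neg (by omega)]
        ring
      · unfold gfun
        ring
      · unfold hfun
        rw [show (2:ℤ)-1 = (1:ℤ) by ring]
        rw [ch_one_right (by linarith), ch_one_right (by linarith)]
        ring
      · unfold hfun
        rw [show (n:ℤ)-2-1 = (n:ℤ)-1-2 by ring]
        have p1 := ch_pascal (a := (n:ℤ)-1-1) (r := (l:ℤ)-1) (by linarith) (by linarith)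
        rw [show (n:ℤ)-1-1+1 = (n:ℤ)-1 by ring,
          show ((l:ℤ)-1)-1 = (l:ℤ)-1-1 by ring] at p1
        have p2 := ch_pascal (a := (n:ℤ)-1-2) (r := (l:ℤ)-1) (by linarith) (by linarith)
        rw [show (n:ℤ)-1-2+1 = (n:ℤ)-1-1 by ring,
          show ((l:ℤ)-1)-1 = (l:ℤ)-1-1 by ring] at p2
        have p3 := ch_pascal (a := (n:ℤ)-1-2) (r := (l:ℤ)-1-1) (by linarith) (by linarith)
        rw [show (n:ℤ)-1-2+1 = (n:ℤ)-1-1 by ring,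
          show ((l:ℤ)-1-1)-1 = (l:ℤ)-1-2 by ring] at p3
        linarith [p1, p2, p3]
    · -- nondegenerate
      have hKk1 : (1:ℤ) ≤ (k:ℤ)-1-1 := by omega
      have hDIII := numer_DIII ((1:ℤ)) ((k:ℤ)-1-1) ((l:ℤ)-1-1) ((n:ℤ)-1-1)
        le_rfl hL1 hKk1 hNbase
      have key := keyIII ((1:ℤ)) ((k:ℤ)-1-1) ((l:ℤ)-1-1) ((n:ℤ)-1-1)
        le_rfl hKk1 hL1 hN0 hclck hDIII
      have key' : ((l:ℤ)*((n:ℤ)-1-1) + (l:ℤ)*((1:ℤ)+1)*((l:ℤ)-1+1)*((k:ℤ)-1-1))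
          * (2*((n:ℤ)-1-1) + (k:ℤ)*((1:ℤ)+1)*((k:ℤ)-1+1)*((l:ℤ)-1-1))
          < (((l:ℤ)-1-1)+2)*(((k:ℤ)-1-1)+2)
            *((((n:ℤ)-1-1)-(((l:ℤ)-1-1)+1)*((k:ℤ)-1-1))
              *(((n:ℤ)-1-1)-(((k:ℤ)-1-1)+1)*((l:ℤ)-1-1))) := by
        linarith [key]
      exact combine ((n:ℤ)-1-1) ((k:ℤ)-1-1) ((l:ℤ)-1-1) _ _ _ _ 1
        ((l:ℤ)) 2 ((l:ℤ)*((1:ℤ)+1)*((l:ℤ)-1+1)) ((k:ℤ)*((1:ℤ)+1)*((k:ℤ)-1+1))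
        _ _ hA1 hB1 hA'0 hB'0 eA eB (by norm_num) (by linarith) (by norm_num)
        (mul_nonneg (mul_nonneg (by positivity) (by positivity)) (by linarith))
        (mul_nonneg (mul_nonneg (by positivity) (by positivity)) (by linarith)) hK0 (by linarith) hN0
        (by linarith [hLK]) (by linarith [hKL]) key' hH1 hH2
end

section
/- Let n, k, ℓ, t be positive integers with k ≥ t+1, ℓ ≥ t+1 and n ≥ (t+1)²(k+ℓ)²(k−t+1)(ℓ−t+1)+k+ℓ−t. Then: (i) g(t+2, k, ℓ, t)·g(t+1, ℓ, k, t) < a(k,t)·a(ℓ,t); (ii) g(4, k, ℓ, t)·g(2, ℓ, k, t) < a(k,t)·a(ℓ,t); (iii) if ℓ ≤ 2t+2, then g(ℓ, k, ℓ, t)·g(2, ℓ, k, t) < a(k,t)·a(ℓ,t). -/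
set_option maxHeartbeats 1000000 in

lemma ch_natCast_s17 (A B : ℕ) (h : B ≤ A) : ch (A:ℤ) (B:ℤ) = (A.choose B : ℤ) := by
  simp [ch, h]

lemma pascal' (N K : ℕ) (h : K ≤ N) :
    ch ((N+1:ℕ):ℤ) ((K:ℕ):ℤ) = (N.choose K : ℤ) + ch (N:ℤ) ((K:ℤ)-1) := by
  rcases K with _ | K
  · rw [ch_natCast_s17 (N+1) 0 (by omega)]
    norm_num [ch]
  · rw [ch_natCast_s17 (N+1) (K+1) (by omega),
      show ((K+1:ℕ):ℤ)-1 = (K:ℤ) by push_cast; ring,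
      ch_natCast_s17 N K (by omega)]
    have := Nat.choose_succ_succ (N) (K)
    push_cast [this]
    ring

lemma chQ_mul (N K : ℕ) (h : K ≤ N) :
    ch (N:ℤ) ((K:ℤ)-1) * ((N:ℤ) - K + 1) = (N.choose K : ℤ) * K := by
  rcases K with _ | K
  · norm_num [ch]
  · rw [show ((K+1:ℕ):ℤ)-1 = (K:ℤ) by push_cast; ring, ch_natCast_s17 N K (by omega)]
    have h2 : (N.choose (K+1) : ℤ) * ((K:ℤ)+1) = (N.choose K : ℤ) * ((N:ℤ) - K) := by
      have h1 := Nat.choose_succ_right_eq N K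
      have hc : ((N - K : ℕ):ℤ) = (N:ℤ) - K := by omega
      rw [← hc]
      exact_mod_cast h1
    push_cast
    linarith [h2]

set_option maxHeartbeats 1000000

lemma prod4 (a b e f : ℤ) (ha : 4 ≤ a) (hb : 16 ≤ b) (he : 2 ≤ e) (hf : 2 ≤ f) :
    256 ≤ a*b*e*f := by
  have h1 : 64 ≤ a*b := by nlinarith
  have h2 : 128 ≤ a*b*e := by nlinarith
  nlinarith

lemma hb1core (w l s : ℤ) (hw : 3 ≤ w) (hl : 0 ≤ l) (hs : w+1 ≤ s) :
    128*w*l ≤ 31*s^2*(l+2) := by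
  have h2 : (w+1)^2 ≤ s^2 := by nlinarith
  have h3 : 128*w*l ≤ 31*(w+1)^2*(l+2) := by
    nlinarith [mul_nonneg hl (show (0:ℤ) ≤ 31*w^2-66*w+31 by nlinarith)]
  nlinarith [mul_le_mul_of_nonneg_right h2 (show (0:ℤ) ≤ l+2 by linarith)]

lemma bnd1 (T K L m d : ℤ) (hT : 2 ≤ T) (hK : 0 ≤ K) (hL : 0 ≤ L)
    (hm0 : 0 ≤ m) (hm : m ≤ 2*T) (hd0 : 0 ≤ d) (hdb : d ≤ T*(T+K+1)*(K+2)) :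
    64*(m*d*L) ≤ 31*(T^2*(2*T+K+L)^2*(K+2)*(L+2)) := by
  have hmd : m*d ≤ (2*T)*(T*(T+K+1)*(K+2)) := by
    apply mul_le_mul hm hdb hd0 (by linarith)
  have hmdL : m*d*L ≤ (2*T)*(T*(T+K+1)*(K+2))*L := mul_le_mul_of_nonneg_right hmd hL
  have hw := hb1core (T+K+1) L (2*T+K+L) (by linarith) hL (by linarith)
  have hTK : (0:ℤ) ≤ T^2*(K+2) := by positivity
  calc 64*(m*d*L) ≤ 64*((2*T)*(T*(T+K+1)*(K+2))*L) := by linarith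
    _ = (T^2*(K+2)) * (128*(T+K+1)*L) := by ring
    _ ≤ (T^2*(K+2)) * (31*(2*T+K+L)^2*(L+2)) := mul_le_mul_of_nonneg_left hw hTK
    _ = 31*(T^2*(2*T+K+L)^2*(K+2)*(L+2)) := by ring

lemma bnd3 (T K L c d : ℤ) (hT : 2 ≤ T) (hK : 0 ≤ K) (hL : 0 ≤ L)
    (hc0 : 0 ≤ c) (hcb : c ≤ T*(T+L+1)*(L+2)) (hd0 : 0 ≤ d) (hdb : d ≤ T*(T+K+1)*(K+2)) :
    64*(c*d*K*L) ≤ (T^2*(2*T+K+L)^2*(K+2)*(L+2))*(T^2*(2*T+K+L)^2*(K+2)*(L+2)) := by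
  have hcd : c*d ≤ (T*(T+L+1)*(L+2))*(T*(T+K+1)*(K+2)) :=
    mul_le_mul hcb hdb hd0 (by positivity)
  have h1 : c*d*K*L ≤ (T*(T+L+1)*(L+2))*(T*(T+K+1)*(K+2))*K*L := by
    apply mul_le_mul_of_nonneg_right _ hL
    exact mul_le_mul_of_nonneg_right hcd hK
  have hKK : K ≤ K + 2 := by linarith
  have hLL : L ≤ L + 2 := by linarith
  have h2 : (T*(T+L+1)*(L+2))*(T*(T+K+1)*(K+2))*K*L
      ≤ (T*(T+L+1)*(L+2))*(T*(T+K+1)*(K+2))*(K+2)*(L+2) := by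
    have hbase : (0:ℤ) ≤ (T*(T+L+1)*(L+2))*(T*(T+K+1)*(K+2)) := by positivity
    have s1 : (T*(T+L+1)*(L+2))*(T*(T+K+1)*(K+2))*K
        ≤ (T*(T+L+1)*(L+2))*(T*(T+K+1)*(K+2))*(K+2) := mul_le_mul_of_nonneg_left hKK hbase
    calc (T*(T+L+1)*(L+2))*(T*(T+K+1)*(K+2))*K*L
        ≤ (T*(T+L+1)*(L+2))*(T*(T+K+1)*(K+2))*(K+2)*L := mul_le_mul_of_nonneg_right s1 hL
      _ ≤ (T*(T+L+1)*(L+2))*(T*(T+K+1)*(K+2))*(K+2)*(L+2) := by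
          apply mul_le_mul_of_nonneg_left hLL (by positivity)
  -- now need 64*(T^2*(T+L+1)*(T+K+1)*(K+2)^2*(L+2)^2) ≤ T^4*s^4*(K+2)^2*(L+2)^2
  have key : 64*((T+K+1)*(T+L+1)) ≤ T^2*((2*T+K+L)^2*(2*T+K+L)^2) := by
    have hp : (T+K+1)*(T+L+1) ≤ (2*T+K+L)^2 := by nlinarith
    have hs4 : 16 ≤ (2*T+K+L)^2 := by nlinarith
    have hT4 : 4 ≤ T^2 := by nlinarith
    have h64 : 64 ≤ T^2*(2*T+K+L)^2 := by nlinarith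
    calc 64*((T+K+1)*(T+L+1)) ≤ 64*((2*T+K+L)^2) := by
          apply mul_le_mul_of_nonneg_left hp (by norm_num)
      _ ≤ (T^2*(2*T+K+L)^2)*((2*T+K+L)^2) := by
          apply mul_le_mul_of_nonneg_right h64 (sq_nonneg _)
      _ = T^2*((2*T+K+L)^2*(2*T+K+L)^2) := by ring
  have hpos : (0:ℤ) ≤ T^2*(K+2)^2*(L+2)^2 := by positivity
  calc 64*(c*d*K*L) ≤ 64*((T*(T+L+1)*(L+2))*(T*(T+K+1)*(K+2))*(K+2)*(L+2)) := by linarith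
    _ = (T^2*(K+2)^2*(L+2)^2) * (64*((T+K+1)*(T+L+1))) := by ring
    _ ≤ (T^2*(K+2)^2*(L+2)^2) * (T^2*((2*T+K+L)^2*(2*T+K+L)^2)) :=
        mul_le_mul_of_nonneg_left key hpos
    _ = (T^2*(2*T+K+L)^2*(K+2)*(L+2))*(T^2*(2*T+K+L)^2*(K+2)*(L+2)) := by ring

lemma Eabs (M a1 a2 a3 u v : ℤ) (hM : 256 ≤ M)
    (b1 : 64*a1 ≤ 31*M) (b2 : 64*a2 ≤ 31*M) (b3 : 64*a3 ≤ M*M)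
    (ha1 : 0 ≤ a1) (ha2 : 0 ≤ a2)
    (hu : M+1 ≤ u) (hv : M+1 ≤ v) : a1*u + a2*v + a3 < u*v := by
  have h1 : 64*(a1*u) ≤ 31*M*u := by nlinarith
  have h2 : 64*(a2*v) ≤ 31*M*v := by nlinarith
  have hprod : 0 ≤ (u-(M+1))*(v-(M+1)) := by
    apply mul_nonneg <;> linarith
  have hMu : M*(M+1) ≤ M*u := by nlinarith
  have hMv : M*(M+1) ≤ M*v := by nlinarith
  have hMM : 256*M ≤ M*M := by nlinarith
  nlinarith [hprod, hMu, hMv, hMM]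

lemma key_ineq (T K L m m' Pk Qk Pl Ql u v : ℤ)
    (hT : 2 ≤ T) (hK : 0 ≤ K) (hL : 0 ≤ L)
    (hm0 : 1 ≤ m) (hm : m ≤ 2*T) (hm0' : 1 ≤ m') (hm' : m' ≤ 2*T)
    (hmm : m*m' ≤ T^2 + 2*T)
    (hPk : 0 < Pk) (hPl : 0 < Pl) (hQk : 0 ≤ Qk) (hQl : 0 ≤ Ql)
    (hu : T^2*(2*T+K+L)^2*(K+2)*(L+2) + L + 1 ≤ u)
    (hv : T^2*(2*T+K+L)^2*(K+2)*(L+2) + K + 1 ≤ v)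
    (hQu : Qk * u = Pk * K) (hQv : Ql * v = Pl * L) :
    (m*Pk + (m + (T+L)*T*(L+2))*Qk) * (m'*Pl + (m' + (T+K)*T*(K+2))*Ql)
      < ((T+1)*Pk + Qk) * ((T+1)*Pl + Ql) := by
  have hT0 : (0:ℤ) < T := by linarith
  obtain ⟨c, hc⟩ : ∃ c, m + (T+L)*T*(L+2) = c := ⟨_, rfl⟩
  obtain ⟨d, hd⟩ : ∃ d, m' + (T+K)*T*(K+2) = d := ⟨_, rfl⟩
  obtain ⟨M, hM⟩ : ∃ M, T^2*(2*T+K+L)^2*(K+2)*(L+2) = M := ⟨_, rfl⟩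
  rw [hc, hd]
  rw [hM] at hu hv
  have hc0 : 1 ≤ c := by
    rw [← hc]
    nlinarith [mul_nonneg (mul_nonneg (by linarith : (0:ℤ) ≤ T+L) hT0.le) (by linarith : (0:ℤ) ≤ L+2)]
  have hd0 : 1 ≤ d := by
    rw [← hd]
    nlinarith [mul_nonneg (mul_nonneg (by linarith : (0:ℤ) ≤ T+K) hT0.le) (by linarith : (0:ℤ) ≤ K+2)]
  have hcb : c ≤ T*(T+L+1)*(L+2) := by rw [← hc]; nlinarith [mul_nonneg hT0.le hL]
  have hdb : d ≤ T*(T+K+1)*(K+2) := by rw [← hd]; nlinarith [mul_nonneg hT0.le hK]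
  have hM256 : 256 ≤ M := by
    rw [← hM]
    exact prod4 (T^2) ((2*T+K+L)^2) (K+2) (L+2) (by nlinarith) (by nlinarith [sq_nonneg (2*T+K+L-4)]) (by linarith) (by linarith)
  have b1 : 64*(m*d*L) ≤ 31*M := by
    have := bnd1 T K L m d hT hK hL (by linarith) hm (by linarith) hdb
    linarith [this.trans_eq (by rw [hM])]
  have b2 : 64*(m'*c*K) ≤ 31*M := by
    have h := bnd1 T L K m' c hT hL hK (by linarith) hm' (by linarith) hcb
    have e : 31*(T^2*(2*T+L+K)^2*(L+2)*(K+2)) = 31*M := by rw [← hM]; ring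
    linarith [h.trans_eq e]
  have b3 : 64*(c*d*K*L) ≤ M*M := by
    have h := bnd3 T K L c d hT hK hL (by linarith) hcb (by linarith) hdb
    have e : (T^2*(2*T+K+L)^2*(K+2)*(L+2))*(T^2*(2*T+K+L)^2*(K+2)*(L+2)) = M*M := by rw [hM]
    linarith [h.trans_eq e]
  have hE : m*d*L*u + m'*c*K*v + c*d*K*L < u*v := by
    have := Eabs M (m*d*L) (m'*c*K) (c*d*K*L) u v hM256 b1 b2 b3
      (by positivity) (by positivity) (by linarith) (by linarith)
    linarith
  have huv0 : (0:ℤ) < u*v := by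
    have hu0 : (0:ℤ) < u := by linarith
    have hv0 : (0:ℤ) < v := by linarith
    positivity
  have heq : (m*d*(Pk*Ql) + m'*c*(Qk*Pl) + c*d*(Qk*Ql)) * (u*v)
      = (Pk*Pl) * (m*d*L*u + m'*c*K*v + c*d*K*L) := by
    linear_combination (m*d*Pk*u + c*d*Pk*K) * hQv + (m'*c*Pl*v + c*d*Ql*v) * hQu
  have hA : m*d*(Pk*Ql) + m'*c*(Qk*Pl) + c*d*(Qk*Ql) < Pk*Pl := by
    have h5 : (m*d*(Pk*Ql) + m'*c*(Qk*Pl) + c*d*(Qk*Ql)) * (u*v) < (Pk*Pl) * (u*v) := by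
      rw [heq]; exact mul_lt_mul_of_pos_left hE (mul_pos hPk hPl)
    exact lt_of_mul_lt_mul_right h5 huv0.le
  nlinarith [hA, mul_le_mul_of_nonneg_right hmm (mul_pos hPk hPl).le,
    mul_nonneg hPk.le hQl, mul_nonneg hQk hPl.le, mul_nonneg hQk hQl,
    mul_nonneg (by linarith : (0:ℤ) ≤ T) (mul_nonneg hPk.le hQl),
    mul_nonneg (by linarith : (0:ℤ) ≤ T) (mul_nonneg hQk hPl.le)]


lemma core_g_lt_aa (n k l t : ℕ) (ht0 : 0 < t) (hk : t + 1 ≤ k) (hl : t + 1 ≤ l)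
    (hn : (t+1)^2 * (k+l)^2 * (k - t + 1) * (l - t + 1) + k + l - t ≤ n)
    (m m' : ℤ) (hm0 : 1 ≤ m) (hm : m ≤ 2*((t:ℤ)+1)) (hm0' : 1 ≤ m') (hm' : m' ≤ 2*((t:ℤ)+1))
    (hmm : m * m' ≤ ((t:ℤ)+1)^2 + 2*((t:ℤ)+1)) :
    gfun n m k l t * gfun n m' l k t < afun n k t * afun n l t := by
  obtain ⟨K, rfl⟩ : ∃ K, k = t+1+K := ⟨k-(t+1), by omega⟩
  obtain ⟨L, rfl⟩ : ∃ L, l = t+1+L := ⟨l-(t+1), by omega⟩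
  rw [show (t+1+K)+(t+1+L) = 2*(t+1)+K+L by ring,
      show (t+1+K) - t + 1 = K+2 by omega,
      show (t+1+L) - t + 1 = L+2 by omega] at hn
  obtain ⟨E, hE⟩ : ∃ E, (t+1)^2 * (2*(t+1)+K+L)^2 * (K+2) * (L+2) = E := ⟨_, rfl⟩
  rw [hE] at hn
  obtain ⟨N, rfl⟩ : ∃ N, n = N + (t+2) := ⟨n - (t+2), by omega⟩
  have hKN : K ≤ N := by omega
  have hLN : L ≤ N := by omega
  have htZ : (1:ℤ) ≤ (t:ℤ) := by exact_mod_cast ht0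
  have hEZ : ((t:ℤ)+1)^2*(2*((t:ℤ)+1)+(K:ℤ)+(L:ℤ))^2*((K:ℤ)+2)*((L:ℤ)+2) = (E:ℤ) := by
    rw [← hE]; push_cast; ring
  have hu : ((t:ℤ)+1)^2*(2*((t:ℤ)+1)+(K:ℤ)+(L:ℤ))^2*((K:ℤ)+2)*((L:ℤ)+2) + (L:ℤ) + 1
      ≤ (N:ℤ) - (K:ℤ) + 1 := by rw [hEZ]; omega
  have hv : ((t:ℤ)+1)^2*(2*((t:ℤ)+1)+(K:ℤ)+(L:ℤ))^2*((K:ℤ)+2)*((L:ℤ)+2) + (K:ℤ) + 1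
      ≤ (N:ℤ) - (L:ℤ) + 1 := by rw [hEZ]; omega
  have hkey := key_ineq ((t:ℤ)+1) (K:ℤ) (L:ℤ) m m'
      ((N.choose K : ℕ):ℤ) (ch (N:ℤ) ((K:ℤ)-1)) ((N.choose L : ℕ):ℤ) (ch (N:ℤ) ((L:ℤ)-1))
      ((N:ℤ) - (K:ℤ) + 1) ((N:ℤ) - (L:ℤ) + 1)
      (by linarith) (by positivity) (by positivity)
      hm0 hm hm0' hm' hmm
      (by exact_mod_cast Nat.choose_pos hKN) (by exact_mod_cast Nat.choose_pos hLN)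
      (ch_nonneg _ _) (ch_nonneg _ _)
      hu hv (chQ_mul N K hKN) (chQ_mul N L hLN)
  unfold gfun afun
  rw [show ((N+(t+2):ℕ):ℤ) - (t:ℤ) - 1 = ((N+1:ℕ):ℤ) by push_cast; ring,
      show ((N+(t+2):ℕ):ℤ) - (t:ℤ) - 2 = ((N:ℕ):ℤ) by push_cast; ring,
      show ((t+1+K:ℕ):ℤ) - (t:ℤ) - 1 = ((K:ℕ):ℤ) by push_cast; ring,
      show ((t+1+K:ℕ):ℤ) - (t:ℤ) - 2 = ((K:ℕ):ℤ)-1 by push_cast; ring,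
      show ((t+1+K:ℕ):ℤ) - (t:ℤ) + 1 = ((K:ℕ):ℤ)+2 by push_cast; ring,
      show ((t+1+L:ℕ):ℤ) - (t:ℤ) - 1 = ((L:ℕ):ℤ) by push_cast; ring,
      show ((t+1+L:ℕ):ℤ) - (t:ℤ) - 2 = ((L:ℕ):ℤ)-1 by push_cast; ring,
      show ((t+1+L:ℕ):ℤ) - (t:ℤ) + 1 = ((L:ℕ):ℤ)+2 by push_cast; ring,
      pascal' N K hKN, pascal' N L hLN, ch_natCast_s17 N K hKN, ch_natCast_s17 N L hLN]
  convert hkey using 2 <;> push_cast <;> ring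

/-- Lemma 4.3. -/
theorem g_lt_aa
    (n k l t : ℕ) (hn0 : 0 < n) (ht0 : 0 < t) (hk : t + 1 ≤ k) (hl : t + 1 ≤ l)
    (hn : (t+1)^2 * (k+l)^2 * (k - t + 1) * (l - t + 1) + k + l - t ≤ n) :
    gfun n ((t : ℤ) + 2) k l t * gfun n ((t : ℤ) + 1) l k t < afun n k t * afun n l t ∧
    gfun n 4 k l t * gfun n 2 l k t < afun n k t * afun n l t ∧
    (l ≤ 2 * t + 2 → gfun n l k l t * gfun n 2 l k t < afun n k t * afun n l t) := by
  have htZ : (1:ℤ) ≤ (t:ℤ) := by exact_mod_cast ht0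
  refine ⟨?_, ?_, fun hll => ?_⟩
  · exact core_g_lt_aa n k l t ht0 hk hl hn ((t:ℤ)+2) ((t:ℤ)+1)
      (by linarith) (by linarith) (by linarith) (by linarith) (by nlinarith)
  · exact core_g_lt_aa n k l t ht0 hk hl hn 4 2
      (by norm_num) (by linarith) (by norm_num) (by linarith) (by nlinarith)
  · have htll : (l:ℤ) ≤ 2*(t:ℤ)+2 := by exact_mod_cast hll
    have hlZ : ((t:ℤ))+1 ≤ (l:ℤ) := by exact_mod_cast hl
    exact core_g_lt_aa n k l t ht0 hk hl hn (l:ℤ) 2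
      (by linarith) (by linarith) (by norm_num) (by linarith) (by nlinarith)
end
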